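/- arXiv:2111.13777 — 8 statements merged into one kernel-verified Lean document; each statement's English description precedes it below -/
import Mathlib

section
/- Let P(x) be a real polynomial on a bounded interval I, and suppose there exists p ≥ 1 and λ > 0 such that |P^{(p)}(x)| ≥ λ for all x ∈ I. Then there is a constant C_p depending only on p such that the Lebesgue measure of {x ∈ I : |P(x)| ≤ t} is at most C_p (t/λ)^{1/p} for all t ≥ 0. -/
open MeasureTheory Polynomial Finset

lemma coeff_lagrange_basis {ι : Type*} [DecidableEq ι] (s : Finset ι) (v : ι → ℝ)
    (hv : Set.InjOn v s) {i : ι} (hi : i ∈ s) :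
    (Lagrange.basis s v i).coeff (s.card - 1) = ∏ j ∈ s.erase i, (v i - v j)⁻¹ := by
  have hmon : (∏ j ∈ s.erase i, (X - C (v j))).Monic :=
    monic_prod_of_monic _ _ (fun j _ => monic_X_sub_C (v j))
  have hdeg : (∏ j ∈ s.erase i, (X - C (v j))).natDegree = s.card - 1 := by
    rw [natDegree_prod_of_monic _ _ (fun j _ => monic_X_sub_C (v j))]
    simp [card_erase_of_mem hi]
  have : Lagrange.basis s v i
      = C (∏ j ∈ s.erase i, (v i - v j)⁻¹) * ∏ j ∈ s.erase i, (X - C (v j)) := by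
    rw [Lagrange.basis]
    simp_rw [Lagrange.basisDivisor]
    rw [prod_mul_distrib, ← map_prod]
  rw [this, coeff_C_mul, ← hdeg, hmon.coeff_natDegree, mul_one]

lemma coeff_interpolate {p : ℕ} (x : Fin (p + 1) → ℝ) (hx : Function.Injective x) (r : Fin (p+1) → ℝ) :
    (Lagrange.interpolate Finset.univ x r).coeff p
      = ∑ i, r i * ∏ j ∈ Finset.univ.erase i, (x i - x j)⁻¹ := by
  rw [Lagrange.interpolate_apply, finset_sum_coeff]
  refine Finset.sum_congr rfl fun i _ => ?_
  rw [coeff_C_mul]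
  have := coeff_lagrange_basis Finset.univ x (hx.injOn) (Finset.mem_univ i)
  simp only [Finset.card_univ, Fintype.card_fin, Nat.add_sub_cancel] at this
  rw [this]

lemma iterated_rolle : ∀ (n : ℕ) (R : Polynomial ℝ) (x : Fin (n+1) → ℝ), StrictMono x →
    (∀ i, R.eval (x i) = 0) →
    ∃ ξ ∈ Set.Icc (x 0) (x (Fin.last n)), (Polynomial.derivative^[n] R).eval ξ = 0 := by
  intro n
  induction n with
  | zero =>
    intro R x _ hz
    exact ⟨x 0, Set.mem_Icc.2 ⟨le_refl _, le_refl _⟩, by simpa using hz 0⟩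
  | succ n ih =>
    intro R x hx hz
    have key : ∀ i : Fin (n+1), ∃ c ∈ Set.Ioo (x i.castSucc) (x i.succ),
        (derivative R).eval c = 0 := by
      intro i
      have hab : x i.castSucc < x i.succ := hx Fin.castSucc_lt_succ
      obtain ⟨c, hc, hc0⟩ := exists_deriv_eq_zero hab
        (R.continuous.continuousOn) (by rw [hz, hz])
      refine ⟨c, hc, ?_⟩
      rwa [Polynomial.deriv] at hc0
    choose y hy hy0 using key
    have hymono : StrictMono y := by
      intro i j hij
      calc y i < x i.succ := (hy i).2
        _ ≤ x j.castSucc := hx.monotone (by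
            rw [Fin.succ_le_castSucc_iff]; exact hij)
        _ < y j := (hy j).1
    obtain ⟨ξ, hξ, hξ0⟩ := ih (derivative R) y hymono hy0
    refine ⟨ξ, ?_, ?_⟩
    · constructor
      · calc x 0 = x (0 : Fin (n+1)).castSucc := by norm_num
          _ ≤ y 0 := (hy 0).1.le
          _ ≤ ξ := hξ.1
      · calc ξ ≤ y (Fin.last n) := hξ.2
          _ ≤ x (Fin.last n).succ := (hy _).2.le
          _ = x (Fin.last (n+1)) := by rw [Fin.succ_last]
    · rwa [Function.iterate_succ_apply]

lemma key_bound (p : ℕ) (P : Polynomial ℝ) (x : Fin (p+1) → ℝ)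
    (t lam δ : ℝ) (hδ : 0 < δ)
    (hsep : ∀ i j : Fin (p+1), (i : ℕ) < (j : ℕ) → x i + δ ≤ x j)
    (ht : ∀ i, |P.eval (x i)| ≤ t) (J : Set ℝ) (hJ : J.OrdConnected)
    (hxJ : ∀ i, x i ∈ J)
    (hlam : ∀ z ∈ J, lam ≤ |(Polynomial.derivative^[p] P).eval z|) :
    lam * δ ^ p ≤ p.factorial * ((p + 1) * t) := by
  have hmono : StrictMono x := fun i j hij => lt_of_lt_of_le (by linarith) (hsep i j hij)
  have hinj : Function.Injective x := hmono.injective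
  have habs : ∀ i j : Fin (p+1), i ≠ j → δ ≤ |x i - x j| := by
    intro i j hij
    rcases lt_or_gt_of_ne hij with h | h
    · rw [abs_sub_comm, abs_of_pos (by linarith [hsep i j h] : (0:ℝ) < x j - x i)]
      linarith [hsep i j h]
    · rw [abs_of_pos (by linarith [hsep j i h] : (0:ℝ) < x i - x j)]
      linarith [hsep j i h]
  set r : Fin (p+1) → ℝ := fun i => P.eval (x i) with hr
  set L := Lagrange.interpolate Finset.univ x r with hL
  -- the remainder vanishes at the nodes
  have hzero : ∀ i, (P - L).eval (x i) = 0 := by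
    intro i
    rw [eval_sub, hL, Lagrange.eval_interpolate_at_node r hinj.injOn (mem_univ i)]
    simp [hr]
  obtain ⟨ξ, hξmem, hξ0⟩ := iterated_rolle p (P - L) x hmono hzero
  have hξJ : ξ ∈ J := hJ.out (hxJ 0) (hxJ (Fin.last p)) hξmem
  -- degree of L
  have hLdeg : L.natDegree ≤ p := by
    rcases eq_or_ne L 0 with h | h
    · simp [h]
    · have h2 := Lagrange.degree_interpolate_lt (s := Finset.univ) (v := x) r hinj.injOn
      simp only [Finset.card_univ, Fintype.card_fin] at h2
      have h3 : L.natDegree < p + 1 := by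
        rw [Polynomial.natDegree_lt_iff_degree_lt h]
        exact_mod_cast h2
      omega
  -- iterated derivative of L is constant
  have hDL : (Polynomial.derivative^[p] L) = C ((p.factorial : ℝ) * L.coeff p) := by
    have hdeg0 : (Polynomial.derivative^[p] L).natDegree = 0 := by
      have := Polynomial.natDegree_iterate_derivative L p
      omega
    rw [Polynomial.eq_C_of_natDegree_eq_zero hdeg0]
    congr 1
    rw [Polynomial.coeff_iterate_derivative]
    simp [Nat.descFactorial_self, nsmul_eq_mul]
  have heq : (Polynomial.derivative^[p] P).eval ξ = (p.factorial : ℝ) * L.coeff p := by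
    have : (Polynomial.derivative^[p] (P - L)) =
        Polynomial.derivative^[p] P - Polynomial.derivative^[p] L :=
      Polynomial.iterate_derivative_sub
    rw [this] at hξ0
    rw [eval_sub, sub_eq_zero] at hξ0
    rw [hξ0, hDL, eval_C]
  -- bound the coefficient
  have hcoeff : |L.coeff p| ≤ (p + 1) * (t * (δ⁻¹) ^ p) := by
    rw [hL, coeff_interpolate x hinj r]
    calc |∑ i, r i * ∏ j ∈ Finset.univ.erase i, (x i - x j)⁻¹|
        ≤ ∑ i, |r i * ∏ j ∈ Finset.univ.erase i, (x i - x j)⁻¹| :=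
          Finset.abs_sum_le_sum_abs _ _
      _ ≤ ∑ _i : Fin (p+1), t * (δ⁻¹) ^ p := by
          refine Finset.sum_le_sum fun i _ => ?_
          rw [abs_mul]
          refine mul_le_mul (ht i) ?_ (abs_nonneg _) ?_
          · rw [abs_prod]
            have hcard : (Finset.univ.erase i).card = p := by
              rw [Finset.card_erase_of_mem (mem_univ i)]
              simp
            calc ∏ j ∈ Finset.univ.erase i, |(x i - x j)⁻¹|
                ≤ ∏ _j ∈ Finset.univ.erase i, δ⁻¹ := by
                  refine Finset.prod_le_prod (fun j _ => abs_nonneg _) fun j hj => ?_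
                  rw [abs_inv]
                  exact inv_anti₀ hδ (habs i j (by
                    intro h; exact (Finset.mem_erase.1 hj).1 h.symm))
              _ = (δ⁻¹) ^ p := by rw [Finset.prod_const, hcard]
          · exact le_trans (abs_nonneg _) (ht i)
      _ = (p + 1) * (t * (δ⁻¹) ^ p) := by
          rw [Finset.sum_const]
          simp [nsmul_eq_mul]
  have hlamle : lam ≤ (p.factorial : ℝ) * ((p + 1) * (t * (δ⁻¹) ^ p)) := by
    calc lam ≤ |(Polynomial.derivative^[p] P).eval ξ| := hlam ξ hξJ
      _ = |(p.factorial : ℝ) * L.coeff p| := by rw [heq]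
      _ = (p.factorial : ℝ) * |L.coeff p| := by
          rw [abs_mul, abs_of_nonneg (by positivity : (0:ℝ) ≤ (p.factorial : ℝ))]
      _ ≤ (p.factorial : ℝ) * ((p + 1) * (t * (δ⁻¹) ^ p)) := by
          exact mul_le_mul_of_nonneg_left hcoeff (by positivity)
  have hδp : (0:ℝ) < δ ^ p := by positivity
  have := mul_le_mul_of_nonneg_right hlamle hδp.le
  calc lam * δ ^ p ≤ (p.factorial : ℝ) * ((p + 1) * (t * (δ⁻¹) ^ p)) * δ ^ p := this
    _ = (p.factorial : ℝ) * ((p + 1) * t) * ((δ⁻¹ * δ) ^ p) := by ring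
    _ = (p.factorial : ℝ) * ((p + 1) * t) := by
        rw [inv_mul_cancel₀ (ne_of_gt hδ), one_pow, mul_one]

open MeasureTheory

/-- If `|P^{(p)}(x)| ≥ λ` on a bounded interval `I`, then
`Vol₁{x ∈ I : |P(x)| ≤ t} ≤ C_p (t/λ)^{1/p}` with `C_p` depending only on `p`. -/
theorem sublevel_measure_le_of_iterated_deriv_lower_bound (p : ℕ) (hp : 1 ≤ p) :
    ∃ C : ℝ, 0 < C ∧
      ∀ (P : Polynomial ℝ) (I : Set ℝ), I.OrdConnected → Bornology.IsBounded I →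
        ∀ lam : ℝ, 0 < lam →
          (∀ x ∈ I, lam ≤ |(Polynomial.derivative^[p] P).eval x|) →
          ∀ t : ℝ, 0 ≤ t →
            volume {x ∈ I | |P.eval x| ≤ t} ≤ ENNReal.ofReal (C * (t / lam) ^ ((1 : ℝ) / p)) := by
  classical
  have hp0 : (0:ℝ) < p := by exact_mod_cast hp
  refine ⟨(p : ℝ) * (p.factorial * (p + 1)), by positivity, ?_⟩
  intro P I hI hIb lam hlam hbound t ht
  set E := {x ∈ I | |P.eval x| ≤ t} with hEdef
  have hEI : E ⊆ I := fun x hx => hx.1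
  rcases E.eq_empty_or_nonempty with hE | hE
  · rw [hE]
    simp
  have hEb : Bornology.IsBounded E := hIb.subset hEI
  have hbdd : BddBelow E := hEb.bddBelow
  have hvol_fin : volume E ≠ ⊤ := hEb.measure_lt_top.ne
  have hclE_t : ∀ z ∈ closure E, |P.eval z| ≤ t := fun z hz =>
    closure_minimal (fun x hx => hx.2)
      (isClosed_le (continuous_abs.comp (P.continuous)) continuous_const) hz
  have hclI : closure E ⊆ closure I := closure_mono hEI
  have hJoc : (closure I).OrdConnected := (hI.isPreconnected.closure).ordConnected
  have hlam' : ∀ z ∈ closure I, lam ≤ |(Polynomial.derivative^[p] P).eval z| := fun z hz =>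
    closure_minimal hbound
      (isClosed_le continuous_const (continuous_abs.comp (Polynomial.continuous _))) hz
  -- dichotomy for every δ > 0
  have main : ∀ δ : ℝ, 0 < δ →
      volume E ≤ ENNReal.ofReal ((p : ℝ) * δ) ∨
        lam * δ ^ p ≤ p.factorial * ((p + 1) * t) := by
    intro δ hδ
    set y : ℕ → ℝ := fun n => Nat.rec (sInf E) (fun _ prev => sInf (E ∩ Set.Ici (prev + δ))) n
      with hydef
    have hy0 : y 0 = sInf E := rfl
    have hysucc : ∀ n, y (n + 1) = sInf (E ∩ Set.Ici (y n + δ)) := fun n => rfl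
    by_cases hgood : ∀ n < p, (E ∩ Set.Ici (y n + δ)).Nonempty
    · right
      have hycl : ∀ n ≤ p, y n ∈ closure E := by
        intro n hn
        cases n with
        | zero => exact hy0 ▸ csInf_mem_closure hE hbdd
        | succ m =>
          rw [hysucc]
          exact closure_mono Set.inter_subset_left
            (csInf_mem_closure (hgood m (by omega)) (hbdd.mono Set.inter_subset_left))
      have hgap : ∀ n < p, y n + δ ≤ y (n + 1) := by
        intro n hn
        rw [hysucc]
        exact le_csInf (hgood n hn) fun b hb => hb.2
      have hsep : ∀ a b : ℕ, a < b → b ≤ p → y a + δ ≤ y b := by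
        intro a b
        induction b with
        | zero => omega
        | succ m ih =>
          intro hab hbp
          rcases Nat.lt_succ_iff_lt_or_eq.mp hab with h | h
          · have h1 := ih h (by omega)
            have h2 := hgap m (by omega)
            linarith
          · subst h; exact hgap a (by omega)
      refine key_bound p P (fun i : Fin (p+1) => y i) t lam δ hδ
        (fun i j hij => hsep i j hij (Nat.lt_succ_iff.mp j.isLt))
        (fun i => hclE_t _ (hycl i (Nat.lt_succ_iff.mp i.isLt)))
        (closure I) hJoc (fun i => hclI (hycl i (Nat.lt_succ_iff.mp i.isLt))) hlam'
    · left
      push_neg at hgood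
      obtain ⟨n0, hn0p, hn0e⟩ := hgood
      have hex : ∃ n, n < p ∧ E ∩ Set.Ici (y n + δ) = ∅ := ⟨n0, hn0p, hn0e⟩
      set n := Nat.find hex with hn
      obtain ⟨hnp, hnempty⟩ := Nat.find_spec hex
      have hcover : E ⊆ ⋃ j ∈ Finset.range (n + 1), Set.Ico (y j) (y j + δ) := by
        intro e he
        have hQ0 : y 0 ≤ e := hy0 ▸ csInf_le hbdd he
        set Q : ℕ → Prop := fun j => y j ≤ e with hQdef
        set j := Nat.findGreatest Q n with hj
        have hQj : Q j := Nat.findGreatest_spec (Nat.zero_le n) hQ0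
        have hjn : j ≤ n := Nat.findGreatest_le n
        have hlt : e < y j + δ := by
          by_contra hcon
          push_neg at hcon
          have heS : e ∈ E ∩ Set.Ici (y j + δ) := ⟨he, hcon⟩
          rcases eq_or_lt_of_le hjn with hje | hje
          · have : e ∈ (∅ : Set ℝ) := by
              rw [← hnempty]
              show e ∈ E ∩ Set.Ici (y n + δ)
              rw [← hje]; exact heS
            exact this
          · have hQj1 : Q (j + 1) := by
              rw [hQdef]
              simp only
              rw [hysucc]
              exact csInf_le (hbdd.mono Set.inter_subset_left) heS
            have := Nat.le_findGreatest (by omega : j + 1 ≤ n) hQj1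
            omega
        exact Set.mem_biUnion (Finset.mem_range.mpr (by omega)) ⟨hQj, hlt⟩
      calc volume E ≤ volume (⋃ j ∈ Finset.range (n + 1), Set.Ico (y j) (y j + δ)) :=
            measure_mono hcover
        _ ≤ ∑ j ∈ Finset.range (n + 1), volume (Set.Ico (y j) (y j + δ)) :=
            measure_biUnion_finset_le _ _
        _ = ∑ _j ∈ Finset.range (n + 1), ENNReal.ofReal δ := by
            refine Finset.sum_congr rfl fun j _ => ?_
            rw [Real.volume_Ico]
            congr 1
            ring
        _ = (n + 1 : ℕ) * ENNReal.ofReal δ := by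
            rw [Finset.sum_const, Finset.card_range, nsmul_eq_mul]
        _ ≤ (p : ℕ) * ENNReal.ofReal δ := by
            gcongr
            exact_mod_cast Nat.cast_le.mpr (by omega : n + 1 ≤ p)
        _ = ENNReal.ofReal ((p : ℝ) * δ) := by
            rw [ENNReal.ofReal_mul (by positivity)]
            congr 1
            simp [ENNReal.ofReal_natCast]
  -- conclude
  set B : ℝ := (p.factorial * (p + 1) * (t / lam)) ^ ((1:ℝ)/p) with hBdef
  have hBnn : 0 ≤ B := Real.rpow_nonneg (by positivity) _
  have hbound2 : ∀ δ : ℝ, B < δ → (volume E).toReal ≤ (p : ℝ) * δ := by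
    intro δ hδB
    have hδ : 0 < δ := lt_of_le_of_lt hBnn hδB
    rcases main δ hδ with h | h
    · exact ENNReal.toReal_le_of_le_ofReal (by positivity) h
    · exfalso
      have hδp : δ ^ p ≤ p.factorial * (p + 1) * (t / lam) := by
        have hrw : (p.factorial : ℝ) * (p + 1) * (t / lam)
            = (p.factorial * ((p + 1) * t)) / lam := by ring
        rw [hrw, le_div_iff₀ hlam]
        calc δ ^ p * lam = lam * δ ^ p := by ring
          _ ≤ p.factorial * ((p + 1) * t) := h
      have : δ ≤ B := by
        have h1 : δ = (δ ^ p) ^ ((1:ℝ)/p) := by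
          rw [← Real.rpow_natCast δ p, ← Real.rpow_mul hδ.le]
          rw [mul_one_div, div_self (by positivity), Real.rpow_one]
        rw [h1, hBdef]
        exact Real.rpow_le_rpow (by positivity) hδp (by positivity)
      linarith
  have htoReal : (volume E).toReal ≤ (p : ℝ) * B := by
    refine le_of_forall_pos_le_add fun ε hε => ?_
    have := hbound2 (B + ε / p) (lt_add_of_pos_right B (by positivity))
    calc (volume E).toReal ≤ (p : ℝ) * (B + ε / p) := this
      _ = (p : ℝ) * B + ε := by field_simp
  have hfinal : (p : ℝ) * B ≤ (p : ℝ) * (p.factorial * (p + 1)) * (t / lam) ^ ((1:ℝ)/p) := by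
    have hsplit : B = ((p.factorial : ℝ) * (p + 1)) ^ ((1:ℝ)/p) * (t / lam) ^ ((1:ℝ)/p) := by
      rw [hBdef, ← Real.mul_rpow (by positivity) (by positivity)]
    have hfac1 : (1:ℝ) ≤ (p.factorial : ℝ) * (p + 1) := by
      have : (1:ℝ) ≤ (p.factorial : ℝ) := by exact_mod_cast p.factorial_pos
      nlinarith
    have hexp : ((p.factorial : ℝ) * (p + 1)) ^ ((1:ℝ)/p) ≤ (p.factorial : ℝ) * (p + 1) := by
      calc ((p.factorial : ℝ) * (p + 1)) ^ ((1:ℝ)/p)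
          ≤ ((p.factorial : ℝ) * (p + 1)) ^ (1:ℝ) :=
            Real.rpow_le_rpow_of_exponent_le hfac1 (by
              rw [div_le_one hp0]; exact_mod_cast hp)
        _ = (p.factorial : ℝ) * (p + 1) := Real.rpow_one _
    rw [hsplit]
    have h2 : (0:ℝ) ≤ (t / lam) ^ ((1:ℝ)/p) := Real.rpow_nonneg (by positivity) _
    calc (p : ℝ) * (((p.factorial : ℝ) * (p + 1)) ^ ((1:ℝ)/p) * (t / lam) ^ ((1:ℝ)/p))
        ≤ (p : ℝ) * ((p.factorial : ℝ) * (p + 1) * (t / lam) ^ ((1:ℝ)/p)) := by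
          refine mul_le_mul_of_nonneg_left ?_ (by positivity)
          exact mul_le_mul_of_nonneg_right hexp h2
      _ = (p : ℝ) * (p.factorial * (p + 1)) * (t / lam) ^ ((1:ℝ)/p) := by ring
  calc volume E = ENNReal.ofReal (volume E).toReal := (ENNReal.ofReal_toReal hvol_fin).symm
    _ ≤ ENNReal.ofReal ((p : ℝ) * (p.factorial * (p + 1)) * (t / lam) ^ ((1:ℝ)/p)) :=
        ENNReal.ofReal_le_ofReal (le_trans htoReal hfinal)
end

section
/- Let g(a,s) = a_0 + a_1 s + ... + a_d s^d, where a = (a_0,...,a_d) ∈ ℝ^{d+1}. Fix m, R > 0 and set K = {a ∈ ℝ^{d+1} : |a_0| + ... + |a_d| ≥ m} and I = [-R, R]. Then there exists λ = λ(d, m, R) > 0 such that for each a ∈ K, either there exists p ∈ {1,...,d} with |∂^p g/∂s^p (a,s)| ≥ λ for all s ∈ I, or |a_0| - sup_{s ∈ I} |g(a,s) - a_0| ≥ λ. -/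
open Polynomial Finset

private lemma iteratedDeriv_polyeval (P : Polynomial ℝ) (k : ℕ) :
    iteratedDeriv k (fun x : ℝ => P.eval x) = fun x => (Polynomial.derivative^[k] P).eval x := by
  induction k with
  | zero => simp
  | succ k ih =>
    rw [iteratedDeriv_succ, ih, Function.iterate_succ_apply']
    funext x
    exact Polynomial.deriv (p := Polynomial.derivative^[k] P)

private lemma descFactorial_le_factorial {n k : ℕ} (h : k ≤ n) :
    n.descFactorial k ≤ n.factorial := by
  calc n.descFactorial k ≤ (n - k).factorial * n.descFactorial k :=
        Nat.le_mul_of_pos_left _ (Nat.factorial_pos _)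
  _ = n.factorial := Nat.factorial_mul_descFactorial h

/-- uniform lower bound `λ(d,m,R)` such that each coefficient vector `a`
with `ℓ¹`-norm at least `m` admits either a derivative bound `|∂^p g/∂s^p| ≥ λ` on
`[-R,R]` for some `1 ≤ p ≤ d`, or the constant-term domination
`|a₀| - sup_{s ∈ [-R,R]} |g(a,s) - a₀| ≥ λ`. -/
theorem exists_uniform_lambda_for_coefficient_vectors (d : ℕ) (m R : ℝ) (hm : 0 < m) (hR : 0 < R) :
    ∃ lam : ℝ, 0 < lam ∧
      ∀ a : Fin (d + 1) → ℝ, m ≤ ∑ i, |a i| →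
        (∃ p, 1 ≤ p ∧ p ≤ d ∧ ∀ s ∈ Set.Icc (-R) R,
            lam ≤ |iteratedDeriv p (fun s : ℝ => ∑ i : Fin (d + 1), a i * s ^ (i : ℕ)) s|) ∨
        (∀ s ∈ Set.Icc (-R) R,
            |(∑ i : Fin (d + 1), a i * s ^ (i : ℕ)) - a 0| ≤ |a 0| - lam) := by
  classical
  set c : ℝ := m / (d + 1) with hc_def
  have hd1 : (0:ℝ) < (d:ℝ) + 1 := by positivity
  have hc : 0 < c := div_pos hm hd1
  have hfac1 : (1:ℝ) ≤ (d.factorial : ℝ) := by exact_mod_cast d.factorial_pos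
  set δ : ℝ := min 1 ((2 * ((d:ℝ) + 1) * (d.factorial : ℝ) * R)⁻¹) with hδ_def
  have hδ0 : 0 < δ := lt_min one_pos (by positivity)
  have hδ1 : δ ≤ 1 := min_le_left _ _
  have hδRle : δ * R ≤ (2 * ((d:ℝ) + 1) * (d.factorial : ℝ))⁻¹ := by
    calc δ * R ≤ (2 * ((d:ℝ) + 1) * (d.factorial : ℝ) * R)⁻¹ * R :=
          mul_le_mul_of_nonneg_right (min_le_right _ _) hR.le
    _ = (2 * ((d:ℝ) + 1) * (d.factorial : ℝ))⁻¹ := by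
        field_simp
  have hδR1 : δ * R ≤ 1 := by
    refine hδRle.trans (inv_le_one_of_one_le₀ ?_)
    nlinarith [hfac1, hd1]
  have hδR : (d:ℝ) * (d.factorial : ℝ) * (δ * R) ≤ 1/2 := by
    have h1 : (d:ℝ) * (d.factorial : ℝ) * (δ * R)
        ≤ (d:ℝ) * (d.factorial : ℝ) * (2 * ((d:ℝ) + 1) * (d.factorial : ℝ))⁻¹ := by
      apply mul_le_mul_of_nonneg_left hδRle (by positivity)
    refine h1.trans ?_
    rw [mul_inv_le_iff₀ (by positivity)]
    nlinarith [hfac1, Nat.cast_nonneg (α := ℝ) d]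
  have hδRd : (d:ℝ) * (δ * R) ≤ 1/2 := by
    refine le_trans ?_ hδR
    have h0 : 0 ≤ (d:ℝ) * (δ * R) := by positivity
    nlinarith [hfac1]
  refine ⟨c * δ^d / 2, by positivity, ?_⟩
  intro a ha
  -- auxiliary coefficient function
  set b : ℕ → ℝ := fun n => if h : n < d+1 then a ⟨n, h⟩ else 0 with hb_def
  -- exists a large coefficient
  have hex : ∃ i : Fin (d+1), c ≤ |a i| := by
    by_contra h
    push_neg at h
    have hlt : ∑ i, |a i| < ∑ _i : Fin (d+1), c :=
      Finset.sum_lt_sum_of_nonempty ⟨0, Finset.mem_univ 0⟩ (fun i _ => h i)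
    rw [Finset.sum_const, Finset.card_univ, Fintype.card_fin, nsmul_eq_mul] at hlt
    have : ((d:ℝ)+1) * c = m := by
      rw [hc_def]; field_simp
    push_cast at hlt
    linarith
  obtain ⟨k, hk⟩ := hex
  set Pr : ℕ → Prop := fun n => c * δ^n ≤ |b n| with hPr_def
  have hPk : Pr k := by
    have hbk : b (k:ℕ) = a k := by
      simp [hb_def, k.isLt]
      intro h; exact absurd k.isLt (by omega)
    have h1 : c * δ^(k:ℕ) ≤ c * 1 :=
      mul_le_mul_of_nonneg_left (pow_le_one₀ hδ0.le hδ1) hc.le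
    rw [hPr_def]
    simp only [hbk]
    linarith
  set p : ℕ := Nat.findGreatest Pr d with hp_def
  have hp : Pr p := Nat.findGreatest_spec k.is_le hPk
  have hpd : p ≤ d := Nat.findGreatest_le d
  have hmax : ∀ j, p < j → |b j| ≤ c * δ^j := by
    intro j hj
    by_cases hjd : j ≤ d
    · exact le_of_lt (not_le.mp (Nat.findGreatest_is_greatest hj hjd))
    · have : b j = 0 := dif_neg (by omega)
      rw [this, abs_zero]; positivity
  -- polynomial
  set Q : Polynomial ℝ := ∑ i : Fin (d+1), Polynomial.C (a i) * Polynomial.X ^ (i:ℕ) with hQ_def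
  have hQeval : ∀ s : ℝ, Q.eval s = ∑ i : Fin (d+1), a i * s^(i:ℕ) := by
    intro s
    simp [hQ_def, Polynomial.eval_finset_sum]
  have hQcoeff : ∀ n, Q.coeff n = b n := by
    intro n
    rw [hQ_def]
    simp only [Polynomial.finset_sum_coeff, Polynomial.coeff_C_mul, Polynomial.coeff_X_pow,
      mul_ite, mul_one, mul_zero]
    by_cases h : n < d + 1
    · rw [Finset.sum_eq_single (⟨n, h⟩ : Fin (d+1))]
      · simp [hb_def, h]
        intro h'; exact absurd h (by omega)
      · intro i _ hi
        rw [if_neg]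
        exact fun hv => hi (Fin.ext hv.symm)
      · intro h'; exact absurd (Finset.mem_univ _) h'
    · rw [Finset.sum_eq_zero, eq_comm]
      · simp [hb_def, h]
        intro h'; exact absurd h (by omega)
      · intro i _
        rw [if_neg]
        omega
  have hQdeg : Q.natDegree ≤ d := by
    apply Polynomial.natDegree_sum_le_of_forall_le
    intro i _
    exact le_trans (Polynomial.natDegree_C_mul_X_pow_le _ _) i.is_le
  have hiter : ∀ (q : ℕ) (s : ℝ),
      iteratedDeriv q (fun s : ℝ => ∑ i : Fin (d+1), a i * s^(i:ℕ)) s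
        = ∑ n ∈ Finset.range (d+1), ((n+q).descFactorial q : ℝ) * b (n+q) * s^n := by
    intro q s
    have hfun : (fun s : ℝ => ∑ i : Fin (d+1), a i * s^(i:ℕ)) = fun x => Q.eval x :=
      funext fun s => (hQeval s).symm
    rw [hfun, iteratedDeriv_polyeval]
    show Polynomial.eval s (Polynomial.derivative^[q] Q) = _
    have hdeg : (Polynomial.derivative^[q] Q).natDegree < d + 1 :=
      lt_of_le_of_lt (le_trans (Polynomial.natDegree_iterate_derivative Q q)
        (le_trans (Nat.sub_le _ _) hQdeg)) (Nat.lt_succ_self d)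
    rw [Polynomial.eval_eq_sum_range' hdeg]
    refine Finset.sum_congr rfl (fun n _ => ?_)
    rw [Polynomial.coeff_iterate_derivative, hQcoeff, nsmul_eq_mul]
  rcases Nat.eq_zero_or_pos p with hp0 | hp1
  · -- constant term dominates
    right
    intro s hs
    have hsR : |s| ≤ R := abs_le.mpr ⟨hs.1, hs.2⟩
    have hba : ∀ i : Fin d, a i.succ = b ((i:ℕ)+1) := by
      intro i
      have h : (i:ℕ)+1 < d+1 := by omega
      simp only [hb_def, dif_pos h]
      congr 1
    have hsplit : (∑ i : Fin (d+1), a i * s^(i:ℕ)) - a 0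
        = ∑ i : Fin d, b ((i:ℕ)+1) * s^((i:ℕ)+1) := by
      rw [Fin.sum_univ_succ]
      simp only [Fin.val_zero, pow_zero, mul_one, Fin.val_succ]
      rw [add_sub_cancel_left]
      exact Finset.sum_congr rfl (fun i _ => by rw [hba i])
    rw [hsplit]
    have hterm : ∀ i : Fin d, |b ((i:ℕ)+1) * s^((i:ℕ)+1)| ≤ c * (δ * R) := by
      intro i
      have hb : |b ((i:ℕ)+1)| ≤ c * δ^((i:ℕ)+1) := hmax _ (by omega)
      calc |b ((i:ℕ)+1) * s^((i:ℕ)+1)| = |b ((i:ℕ)+1)| * |s|^((i:ℕ)+1) := by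
            rw [abs_mul, abs_pow]
      _ ≤ (c * δ^((i:ℕ)+1)) * R^((i:ℕ)+1) := by
            apply mul_le_mul hb (pow_le_pow_left₀ (abs_nonneg s) hsR _)
              (by positivity) (by positivity)
      _ = c * (δ * R)^((i:ℕ)+1) := by rw [mul_pow]; ring
      _ ≤ c * (δ * R)^1 :=
            mul_le_mul_of_nonneg_left
              (pow_le_pow_of_le_one (by positivity) hδR1 (by omega)) hc.le
      _ = c * (δ * R) := by rw [pow_one]
    have hsum : |∑ i : Fin d, b ((i:ℕ)+1) * s^((i:ℕ)+1)| ≤ (d:ℝ) * (c * (δ * R)) := by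
      calc |∑ i : Fin d, b ((i:ℕ)+1) * s^((i:ℕ)+1)|
          ≤ ∑ i : Fin d, |b ((i:ℕ)+1) * s^((i:ℕ)+1)| := Finset.abs_sum_le_sum_abs _ _
      _ ≤ ∑ _i : Fin d, c * (δ * R) := Finset.sum_le_sum (fun i _ => hterm i)
      _ = (d:ℝ) * (c * (δ * R)) := by
          rw [Finset.sum_const, Finset.card_univ, Fintype.card_fin, nsmul_eq_mul]
    have ha0 : c ≤ |a 0| := by
      have hb0 : b 0 = a 0 := by simp [hb_def]
      have := hp
      rw [hPr_def, hp0] at this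
      simpa [hb0] using this
    have hlam : c * δ^d / 2 ≤ c / 2 := by
      have : c * δ^d ≤ c * 1 := mul_le_mul_of_nonneg_left (pow_le_one₀ hδ0.le hδ1) hc.le
      linarith
    have hd2 : (d:ℝ) * (c * (δ * R)) ≤ c / 2 := by
      have : (d:ℝ) * (c * (δ * R)) = c * ((d:ℝ) * (δ * R)) := by ring
      rw [this]
      calc c * ((d:ℝ) * (δ * R)) ≤ c * (1/2) :=
            mul_le_mul_of_nonneg_left hδRd hc.le
      _ = c / 2 := by ring
    linarith [hsum.trans hd2]
  · -- derivative of order p dominates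
    left
    refine ⟨p, hp1, hpd, ?_⟩
    intro s hs
    have hsR : |s| ≤ R := abs_le.mpr ⟨hs.1, hs.2⟩
    rw [hiter p s, Finset.sum_range_succ']
    simp only [zero_add, pow_zero, mul_one]
    set A : ℝ := ∑ i ∈ Finset.range d, ((i+1+p).descFactorial p : ℝ) * b (i+1+p) * s^(i+1)
      with hA_def
    have hbp : c * δ^p ≤ |b p| := hp
    have hf0 : c * δ^p ≤ |((p.descFactorial p : ℝ)) * b p| := by
      rw [abs_mul, abs_of_nonneg (by positivity : (0:ℝ) ≤ (p.descFactorial p : ℝ))]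
      have h1 : (1:ℝ) ≤ (p.descFactorial p : ℝ) := by
        exact_mod_cast Nat.one_le_iff_ne_zero.mpr (by
          rw [Nat.descFactorial_self]; exact (Nat.factorial_pos p).ne')
      nlinarith [abs_nonneg (b p), hbp]
    have hterm : ∀ i ∈ Finset.range d,
        |((i+1+p).descFactorial p : ℝ) * b (i+1+p) * s^(i+1)|
          ≤ (d.factorial : ℝ) * (c * δ^p) * (δ * R) := by
      intro i _
      by_cases h : i+1+p ≤ d
      · have hb : |b (i+1+p)| ≤ c * δ^(i+1+p) := hmax _ (by omega)
        have hdf : ((i+1+p).descFactorial p : ℝ) ≤ (d.factorial : ℝ) := by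
          exact_mod_cast le_trans (descFactorial_le_factorial (by omega))
            (Nat.factorial_le h)
        calc |((i+1+p).descFactorial p : ℝ) * b (i+1+p) * s^(i+1)|
            = ((i+1+p).descFactorial p : ℝ) * |b (i+1+p)| * |s|^(i+1) := by
              rw [abs_mul, abs_mul, abs_pow,
                abs_of_nonneg (by positivity : (0:ℝ) ≤ ((i+1+p).descFactorial p : ℝ))]
        _ ≤ (d.factorial : ℝ) * (c * δ^(i+1+p)) * R^(i+1) := by
              apply mul_le_mul (mul_le_mul hdf hb (abs_nonneg _) (by positivity))
                (pow_le_pow_left₀ (abs_nonneg s) hsR _) (by positivity) (by positivity)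
        _ = (d.factorial : ℝ) * (c * δ^p) * (δ * R)^(i+1) := by
              rw [mul_pow, pow_add]; ring
        _ ≤ (d.factorial : ℝ) * (c * δ^p) * (δ * R)^1 :=
              mul_le_mul_of_nonneg_left
                (pow_le_pow_of_le_one (by positivity) hδR1 (by omega)) (by positivity)
        _ = (d.factorial : ℝ) * (c * δ^p) * (δ * R) := by rw [pow_one]
      · have hbz : b (i+1+p) = 0 := dif_neg (by omega)
        rw [hbz]
        simp only [mul_zero, zero_mul, abs_zero]
        positivity
    have hA : |A| ≤ (d:ℝ) * ((d.factorial : ℝ) * (c * δ^p) * (δ * R)) := by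
      calc |A| ≤ ∑ i ∈ Finset.range d,
            |((i+1+p).descFactorial p : ℝ) * b (i+1+p) * s^(i+1)| :=
            Finset.abs_sum_le_sum_abs _ _
      _ ≤ ∑ _i ∈ Finset.range d, (d.factorial : ℝ) * (c * δ^p) * (δ * R) :=
            Finset.sum_le_sum hterm
      _ = (d:ℝ) * ((d.factorial : ℝ) * (c * δ^p) * (δ * R)) := by
            rw [Finset.sum_const, Finset.card_range, nsmul_eq_mul]
    have hA2 : |A| ≤ (c * δ^p) / 2 := by
      refine hA.trans ?_
      have : (d:ℝ) * ((d.factorial : ℝ) * (c * δ^p) * (δ * R))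
          = ((d:ℝ) * (d.factorial : ℝ) * (δ * R)) * (c * δ^p) := by ring
      rw [this]
      calc ((d:ℝ) * (d.factorial : ℝ) * (δ * R)) * (c * δ^p) ≤ (1/2) * (c * δ^p) :=
            mul_le_mul_of_nonneg_right hδR (by positivity)
      _ = (c * δ^p) / 2 := by ring
    have htri : |((p.descFactorial p : ℝ)) * b p|
        ≤ |A + ((p.descFactorial p : ℝ)) * b p| + |A| := by
      have := abs_add_le (A + ((p.descFactorial p : ℝ)) * b p) (-A)
      simpa using this
    have hδdp : δ^d ≤ δ^p := pow_le_pow_of_le_one hδ0.le hδ1 hpd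
    have hcd : c * δ^d ≤ c * δ^p := mul_le_mul_of_nonneg_left hδdp hc.le
    linarith
end

section
/- Let f : ℝⁿ → ℝ be a polynomial with an isolated zero at 0, and suppose there exists ε₀ > 0 such that ⟨∇f(x), x⟩ ≠ 0 for all x ∈ B(0,ε₀) \ {0}. Then for all u ∈ [0,1] and all x ∈ B(0,ε₀), one has |f(ux)| ≤ |f(x)|. -/
open RealInnerProductSpace

/-- Auxiliary: evaluating the one-variable polynomial obtained by substituting
`X i ↦ C (x i) * X` agrees with evaluating the multivariate polynomial at `t * x`. -/
lemma aux_eval_poly {n : ℕ} (x : Fin n → ℝ) (f : MvPolynomial (Fin n) ℝ) (t : ℝ) :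
    ((MvPolynomial.aeval (fun i => Polynomial.C (x i) * Polynomial.X)) f).eval t
      = MvPolynomial.eval (fun i => t * x i) f := by
  induction f using MvPolynomial.induction_on with
  | C a => simp
  | add p q hp hq => simp [hp, hq]
  | mul_X p i hp => simp [hp]; ring_nf; tauto

/-- If a real polynomial vanishes at 0 and its derivative doesn't vanish on (0,1],
then |P(u)| ≤ |P(1)| for u ∈ [0,1]. -/
lemma aux_poly_abs_le (P : Polynomial ℝ) (h0 : P.eval 0 = 0)
    (hne : ∀ t ∈ Set.Ioc (0:ℝ) 1, P.derivative.eval t ≠ 0) :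
    ∀ u ∈ Set.Icc (0:ℝ) 1, |P.eval u| ≤ |P.eval 1| := by
  have hcont : ContinuousOn (fun t => P.eval t) (Set.Icc (0:ℝ) 1) :=
    P.continuous_aeval.continuousOn
  have hderiv : ∀ t ∈ interior (Set.Icc (0:ℝ) 1),
      HasDerivAt (fun t => P.eval t) (P.derivative.eval t) t := fun t _ => P.hasDerivAt t
  have hsign : (∀ t ∈ Set.Ioo (0:ℝ) 1, 0 < P.derivative.eval t)
      ∨ (∀ t ∈ Set.Ioo (0:ℝ) 1, P.derivative.eval t < 0) := by
    by_contra hc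
    push_neg at hc
    obtain ⟨⟨a, ha, hsa⟩, ⟨b, hb, hsb⟩⟩ := hc
    have hsa' : P.derivative.eval a < 0 :=
      lt_of_le_of_ne hsa (hne a ⟨ha.1, ha.2.le⟩)
    have hsb' : 0 < P.derivative.eval b :=
      lt_of_le_of_ne hsb (Ne.symm (hne b ⟨hb.1, hb.2.le⟩))
    have hIVT := intermediate_value_uIcc
      (f := fun t => P.derivative.eval t) (a := a) (b := b)
      P.derivative.continuous_aeval.continuousOn
    have h0mem : (0:ℝ) ∈ Set.uIcc (P.derivative.eval a) (P.derivative.eval b) :=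
      Set.mem_uIcc.mpr (Or.inl ⟨hsa'.le, hsb'.le⟩)
    obtain ⟨c, hc1, hc2⟩ := hIVT h0mem
    have hcIoo : c ∈ Set.Ioo (0:ℝ) 1 := Set.ordConnected_Ioo.uIcc_subset ha hb hc1
    exact hne c ⟨hcIoo.1, hcIoo.2.le⟩ hc2
  intro u hu
  rcases hsign with hpos | hneg
  · have hmono : StrictMonoOn (fun t => P.eval t) (Set.Icc (0:ℝ) 1) := by
      apply strictMonoOn_of_hasDerivWithinAt_pos (convex_Icc 0 1) hcont
        (fun t ht => (hderiv t ht).hasDerivWithinAt)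
      intro t ht
      rw [interior_Icc] at ht
      exact hpos t ht
    have h1 : P.eval 0 ≤ P.eval u := hmono.monotoneOn ⟨le_refl 0, zero_le_one⟩ hu hu.1
    have h2 : P.eval u ≤ P.eval 1 := hmono.monotoneOn hu ⟨zero_le_one, le_refl 1⟩ hu.2
    rw [h0] at h1
    rw [abs_of_nonneg h1]
    exact h2.trans (le_abs_self _)
  · have hmono : StrictAntiOn (fun t => P.eval t) (Set.Icc (0:ℝ) 1) := by
      apply strictAntiOn_of_hasDerivWithinAt_neg (convex_Icc 0 1) hcont
        (fun t ht => (hderiv t ht).hasDerivWithinAt)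
      intro t ht
      rw [interior_Icc] at ht
      exact hneg t ht
    have h1 : P.eval u ≤ P.eval 0 := hmono.antitoneOn ⟨le_refl 0, zero_le_one⟩ hu hu.1
    have h2 : P.eval 1 ≤ P.eval u := hmono.antitoneOn hu ⟨zero_le_one, le_refl 1⟩ hu.2
    rw [h0] at h1
    rw [abs_of_nonpos h1]
    calc -P.eval u ≤ -P.eval 1 := neg_le_neg h2
    _ ≤ |P.eval 1| := neg_le_abs _

/-- if the polynomial `f` has an isolated zero at `0` and
`⟨∇f(x), x⟩ ≠ 0` on the punctured ball `B(0,ε₀) \ {0}`, then `|f(ux)| ≤ |f(x)|`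
for all `u ∈ [0,1]` and `x ∈ B(0,ε₀)`. -/
theorem abs_le_of_grad_inner_ne_zero (n : ℕ) (f : MvPolynomial (Fin n) ℝ)
    (F : EuclideanSpace ℝ (Fin n) → ℝ)
    (hF : ∀ x, F x = MvPolynomial.eval (fun i => x i) f)
    (hF0 : F 0 = 0)
    (hiso : ∃ δ > 0, ∀ x : EuclideanSpace ℝ (Fin n), x ≠ 0 → ‖x‖ < δ → F x ≠ 0)
    (ε₀ : ℝ) (hε₀ : 0 < ε₀)
    (hgrad : ∀ x ∈ Metric.ball (0 : EuclideanSpace ℝ (Fin n)) ε₀, x ≠ 0 →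
      ⟪gradient F x, x⟫ ≠ (0 : ℝ)) :
    ∀ u ∈ Set.Icc (0 : ℝ) 1, ∀ x ∈ Metric.ball (0 : EuclideanSpace ℝ (Fin n)) ε₀,
      |F (u • x)| ≤ |F x| := by
  -- F is differentiable everywhere
  have hFdiff : ∀ y : EuclideanSpace ℝ (Fin n), DifferentiableAt ℝ F y := by
    intro y
    have h : AnalyticAt ℝ
        (fun x : EuclideanSpace ℝ (Fin n) => MvPolynomial.aeval (fun i => x i) f) y := by
      apply AnalyticAt.aeval_mvPolynomial
      intro i
      exact (EuclideanSpace.proj i : EuclideanSpace ℝ (Fin n) →L[ℝ] ℝ).analyticAt y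
    have he : (fun x : EuclideanSpace ℝ (Fin n) => MvPolynomial.aeval (fun i => x i) f) = F := by
      funext x
      rw [hF x, MvPolynomial.aeval_def, MvPolynomial.eval]
      rfl
    rw [← he]
    exact h.differentiableAt
  intro u hu x hx
  by_cases hx0 : x = 0
  · subst hx0; simp
  set P : Polynomial ℝ := MvPolynomial.aeval (fun i => Polynomial.C (x i) * Polynomial.X) f
    with hP
  have hPe : ∀ t : ℝ, P.eval t = F (t • x) := by
    intro t
    rw [hF, hP, aux_eval_poly (fun i => x i) f t]
    congr 1
  -- derivative identity
  have hder : ∀ t : ℝ, P.derivative.eval t = ⟪gradient F (t • x), x⟫ := by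
    intro t
    have h1 : HasDerivAt (fun s : ℝ => s • x) x t := by
      simpa using (hasDerivAt_id t).smul_const x
    have h2 : HasDerivAt (fun s : ℝ => F (s • x)) (fderiv ℝ F (t • x) x) t :=
      (hFdiff (t • x)).hasFDerivAt.comp_hasDerivAt t h1
    have h3 : HasDerivAt (fun s : ℝ => F (s • x)) (P.derivative.eval t) t := by
      have := P.hasDerivAt t
      simpa [funext hPe] using this
    have h4 : P.derivative.eval t = fderiv ℝ F (t • x) x := h3.unique h2
    rw [h4, gradient]
    exact (InnerProductSpace.toDual_symm_apply).symm
  have hne : ∀ t ∈ Set.Ioc (0:ℝ) 1, P.derivative.eval t ≠ 0 := by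
    intro t ht
    have hmem : t • x ∈ Metric.ball (0 : EuclideanSpace ℝ (Fin n)) ε₀ := by
      rw [mem_ball_zero_iff] at hx ⊢
      rw [norm_smul]
      calc ‖t‖ * ‖x‖ ≤ 1 * ‖x‖ := by
            apply mul_le_mul_of_nonneg_right _ (norm_nonneg x)
            rw [Real.norm_eq_abs, abs_of_pos ht.1]; exact ht.2
      _ = ‖x‖ := one_mul _
      _ < ε₀ := hx
    have htx0 : t • x ≠ 0 := smul_ne_zero ht.1.ne' hx0
    have h6 := hgrad (t • x) hmem htx0
    rw [real_inner_smul_right] at h6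
    have h5 : ⟪gradient F (t • x), x⟫ ≠ 0 := by
      intro h; apply h6; rw [h, mul_zero]
    rw [hder t]; exact h5
  have h0 : P.eval 0 = 0 := by rw [hPe 0, zero_smul, hF0]
  have hfin := aux_poly_abs_le P h0 hne u hu
  rwa [hPe u, hPe 1, one_smul] at hfin
end

section
/- Let f : ℝⁿ → ℝ be a polynomial with an isolated zero at 0, and suppose there exists ε₀ > 0 such that ⟨∇f(x), x⟩ ≠ 0 for all x ∈ B(0,ε₀) \ {0}. Then for every t ≥ 0, the sub-level set K = {x ∈ B(0,ε₀) : |f(x)| ≤ t} is star-shaped with respect to 0, i.e., for every x ∈ K and every u ∈ [0,1], ux ∈ K. -/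
open RealInnerProductSpace

/-- under the hypotheses of Lemma 3, every sub-level set
`K = {x ∈ B(0,ε₀) : |f(x)| ≤ t}` is star-shaped with respect to `0`. -/
theorem sublevel_starShaped_of_grad_inner_ne_zero (n : ℕ) (f : MvPolynomial (Fin n) ℝ)
    (F : EuclideanSpace ℝ (Fin n) → ℝ)
    (hF : ∀ x, F x = MvPolynomial.eval (fun i => x i) f)
    (hF0 : F 0 = 0)
    (hiso : ∃ δ > 0, ∀ x : EuclideanSpace ℝ (Fin n), x ≠ 0 → ‖x‖ < δ → F x ≠ 0)
    (ε₀ : ℝ) (hε₀ : 0 < ε₀)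
    (hgrad : ∀ x ∈ Metric.ball (0 : EuclideanSpace ℝ (Fin n)) ε₀, x ≠ 0 →
      ⟪gradient F x, x⟫ ≠ (0 : ℝ)) :
    ∀ t : ℝ, 0 ≤ t →
      ∀ x ∈ {y ∈ Metric.ball (0 : EuclideanSpace ℝ (Fin n)) ε₀ | |F y| ≤ t},
        ∀ u ∈ Set.Icc (0 : ℝ) 1,
          u • x ∈ {y ∈ Metric.ball (0 : EuclideanSpace ℝ (Fin n)) ε₀ | |F y| ≤ t} := by
  -- F is smooth
  have hFeq : F = fun x : EuclideanSpace ℝ (Fin n) =>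
      MvPolynomial.eval (fun i => x i) f := funext hF
  have hFan : AnalyticOnNhd ℝ F Set.univ := by
    rw [hFeq]
    exact AnalyticOnNhd.eval_continuousLinearMap
      ((PiLp.continuousLinearEquiv 2 ℝ (fun _ : Fin n => ℝ)) :
        EuclideanSpace ℝ (Fin n) →L[ℝ] (Fin n → ℝ)) f
  have hFc : ContDiff ℝ 2 F := hFan.contDiff
  have hFd : Differentiable ℝ F := hFc.differentiable (by norm_num)
  have hgradc : Continuous (gradient F) := by
    have h1 : Continuous (fun y => fderiv ℝ F y) :=
      hFc.continuous_fderiv (by norm_num)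
    exact ((InnerProductSpace.toDual ℝ
      (EuclideanSpace ℝ (Fin n))).symm.continuous).comp h1
  intro t ht x hx u hu
  obtain ⟨hxball, hxt⟩ := hx
  have hball : u • x ∈ Metric.ball (0 : EuclideanSpace ℝ (Fin n)) ε₀ := by
    rw [Metric.mem_ball, dist_zero_right] at hxball ⊢
    calc ‖u • x‖ = |u| * ‖x‖ := by rw [norm_smul, Real.norm_eq_abs]
    _ ≤ 1 * ‖x‖ := by
        apply mul_le_mul_of_nonneg_right _ (norm_nonneg x)
        rw [abs_of_nonneg hu.1]; exact hu.2
    _ < ε₀ := by rwa [one_mul]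
  refine ⟨hball, ?_⟩
  rcases eq_or_ne x 0 with rfl | hx0
  · simpa [smul_zero, hF0] using ht
  -- define g s = F (s • x)
  set g : ℝ → ℝ := fun s => F (s • x) with hg
  have hderiv : ∀ s : ℝ, HasDerivAt g ⟪gradient F (s • x), x⟫ s := by
    intro s
    have h1 : HasDerivAt (fun s : ℝ => s • x) ((1:ℝ) • x) s :=
      (hasDerivAt_id s).smul_const x
    have h2 : HasFDerivAt F (InnerProductSpace.toDual ℝ _ (gradient F (s • x))) (s • x) :=
      (hFd (s • x)).hasGradientAt.hasFDerivAt
    have := h2.comp_hasDerivAt s (by simpa using h1)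
    simp only [InnerProductSpace.toDual_apply_apply] at this
    exact this
  set φ : ℝ → ℝ := fun s => ⟪gradient F (s • x), x⟫ with hφ
  have hφc : Continuous φ := by
    apply Continuous.inner
    · exact hgradc.comp (continuous_id.smul continuous_const)
    · exact continuous_const
  -- φ is nonzero on (0,1]
  have hφne : ∀ s ∈ Set.Ioc (0:ℝ) 1, φ s ≠ 0 := by
    intro s hs hzero
    have hsx : s • x ∈ Metric.ball (0 : EuclideanSpace ℝ (Fin n)) ε₀ := by
      rw [Metric.mem_ball, dist_zero_right] at hxball ⊢
      calc ‖s • x‖ = |s| * ‖x‖ := by rw [norm_smul, Real.norm_eq_abs]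
      _ ≤ 1 * ‖x‖ := by
          apply mul_le_mul_of_nonneg_right _ (norm_nonneg x)
          rw [abs_of_nonneg hs.1.le]; exact hs.2
      _ < ε₀ := by rwa [one_mul]
    have hsx0 : s • x ≠ 0 := smul_ne_zero (ne_of_gt hs.1) hx0
    apply hgrad (s • x) hsx hsx0
    have : ⟪gradient F (s • x), s • x⟫ = s * φ s :=
      real_inner_smul_right _ _ _
    rw [this, hzero, mul_zero]
  -- φ has constant sign on (0,1]
  have hsign : (∀ s ∈ Set.Ioc (0:ℝ) 1, 0 < φ s) ∨ (∀ s ∈ Set.Ioc (0:ℝ) 1, φ s < 0) := by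
    by_contra h
    push_neg at h
    obtain ⟨⟨a, ha, hφa⟩, ⟨b, hb, hφb⟩⟩ := h
    have hφa' : φ a < 0 := lt_of_le_of_ne hφa (hφne a ha)
    have hφb' : 0 < φ b := lt_of_le_of_ne hφb (Ne.symm (hφne b hb))
    rcases le_total a b with hab | hab
    · obtain ⟨c, hc, hc0⟩ := intermediate_value_Icc hab hφc.continuousOn
        (Set.mem_Icc.mpr ⟨hφa'.le, hφb'.le⟩)
      exact hφne c ⟨lt_of_lt_of_le ha.1 hc.1, le_trans hc.2 hb.2⟩ hc0
    · obtain ⟨c, hc, hc0⟩ := intermediate_value_Icc' hab hφc.continuousOn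
        (Set.mem_Icc.mpr ⟨hφa'.le, hφb'.le⟩)
      exact hφne c ⟨lt_of_lt_of_le hb.1 hc.1, le_trans hc.2 ha.2⟩ hc0
  have hgc : ContinuousOn g (Set.Icc 0 1) :=
    (hFd.continuous.comp (continuous_id.smul continuous_const)).continuousOn
  have hg0 : g 0 = 0 := by simp [hg, hF0]
  have hg1 : g 1 = F x := by simp [hg]
  have hmemu : u ∈ Set.Icc (0:ℝ) 1 := hu
  have h0mem : (0:ℝ) ∈ Set.Icc (0:ℝ) 1 := Set.mem_Icc.mpr ⟨le_refl 0, zero_le_one⟩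
  have h1mem : (1:ℝ) ∈ Set.Icc (0:ℝ) 1 := Set.mem_Icc.mpr ⟨zero_le_one, le_refl 1⟩
  have hIoo : Set.Ioo (0:ℝ) 1 ⊆ Set.Ioc 0 1 := fun s hs => ⟨hs.1, hs.2.le⟩
  rcases hsign with hpos | hneg
  · have hmono : StrictMonoOn g (Set.Icc 0 1) := by
      apply strictMonoOn_of_deriv_pos (convex_Icc 0 1) hgc
      intro s hs
      rw [interior_Icc] at hs
      rw [(hderiv s).deriv]
      exact hpos s (hIoo hs)
    have h1 : g 0 ≤ g u := hmono.monotoneOn h0mem hmemu hu.1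
    have h2 : g u ≤ g 1 := hmono.monotoneOn hmemu h1mem hu.2
    rw [hg0] at h1; rw [hg1] at h2
    calc |F (u • x)| = g u := abs_of_nonneg h1
    _ ≤ F x := h2
    _ ≤ |F x| := le_abs_self _
    _ ≤ t := hxt
  · have hanti : StrictAntiOn g (Set.Icc 0 1) := by
      apply strictAntiOn_of_deriv_neg (convex_Icc 0 1) hgc
      intro s hs
      rw [interior_Icc] at hs
      rw [(hderiv s).deriv]
      exact hneg s (hIoo hs)
    have h1 : g u ≤ g 0 := hanti.antitoneOn h0mem hmemu hu.1
    have h2 : g 1 ≤ g u := hanti.antitoneOn hmemu h1mem hu.2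
    rw [hg0] at h1; rw [hg1] at h2
    calc |F (u • x)| = -(g u) := abs_of_nonpos h1
    _ ≤ -(F x) := by linarith
    _ ≤ |F x| := neg_le_abs _
    _ ≤ t := hxt
end

section
/- Let f : ℝⁿ → ℝ be a nonzero polynomial of degree d and A a bounded subset of ℝⁿ. Then there exists a constant C = C(f, A) > 0 such that Vol({x ∈ A : |f(x)| ≤ t}) ≤ C t^{1/d} for all t ≥ 0. -/
open MeasureTheory Polynomial
open scoped ENNReal NNReal

private lemma ms_aux (r : ℝ) (hr : 0 ≤ r) (M : Multiset ℝ) :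
    (∀ z ∈ M, r < z) → r ^ Multiset.card M ≤ M.prod ∧ 0 < M.prod := by
  induction M using Multiset.induction_on with
  | empty => simp
  | cons a M ih =>
    intro h
    have ha : r < a := h a (Multiset.mem_cons_self a M)
    obtain ⟨h1, h2⟩ := ih (fun z hz => h z (Multiset.mem_cons_of_mem hz))
    refine ⟨?_, ?_⟩
    · simp only [Multiset.card_cons, Multiset.prod_cons, pow_succ]
      calc r ^ Multiset.card M * r ≤ M.prod * a := by
            exact mul_le_mul h1 ha.le hr h2.le
        _ = a * M.prod := mul_comm _ _
    · simp only [Multiset.prod_cons]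
      exact mul_pos (hr.trans_lt ha) h2

private lemma ms_exists_le (r : ℝ) (hr : 0 ≤ r) (M : Multiset ℝ) (hM : M ≠ 0)
    (hp : M.prod ≤ r ^ Multiset.card M) : ∃ z ∈ M, z ≤ r := by
  by_contra hc
  push_neg at hc
  obtain ⟨a, ha⟩ := Multiset.exists_mem_of_ne_zero hM
  obtain ⟨M', rfl⟩ := Multiset.exists_cons_of_mem ha
  obtain ⟨h1, h2⟩ := ms_aux r hr M' (fun z hz => hc z (Multiset.mem_cons_of_mem hz))
  have ha' : r < a := hc a (Multiset.mem_cons_self a M')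
  rw [Multiset.prod_cons, Multiset.card_cons, pow_succ] at hp
  nlinarith [pow_nonneg hr (Multiset.card M')]

private lemma ms_prod_le (M : Multiset ℂ) (g h : ℂ → ℝ) (h1 : ∀ z ∈ M, 0 ≤ g z)
    (h2 : ∀ z ∈ M, g z ≤ h z) : (M.map g).prod ≤ (M.map h).prod := by
  induction M using Multiset.induction_on with
  | empty => simp
  | cons a M ih =>
    simp only [Multiset.map_cons, Multiset.prod_cons]
    have hg : 0 ≤ (M.map g).prod := by
      refine Multiset.prod_nonneg ?_
      intro x hx
      obtain ⟨z, hz, rfl⟩ := Multiset.mem_map.mp hx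
      exact h1 z (Multiset.mem_cons_of_mem hz)
    exact mul_le_mul (h2 a (Multiset.mem_cons_self a M))
      (ih (fun z hz => h1 z (Multiset.mem_cons_of_mem hz))
          (fun z hz => h2 z (Multiset.mem_cons_of_mem hz)))
      hg ((h1 a (Multiset.mem_cons_self a M)).trans (h2 a (Multiset.mem_cons_self a M)))


private lemma oneD (p : ℝ[X]) (d : ℕ) (hdeg : p.natDegree = d) (hd1 : 1 ≤ d)
    (t : ℝ) (ht : 0 ≤ t) :
    volume {s : ℝ | |p.eval s| ≤ t} ≤
      ENNReal.ofReal (2 * d * (t / |p.leadingCoeff|) ^ ((1 : ℝ) / d)) := by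
  have hp0 : p ≠ 0 := by
    intro h
    rw [h, natDegree_zero] at hdeg
    omega
  set a := p.leadingCoeff with ha
  have ha0 : a ≠ 0 := leadingCoeff_ne_zero.mpr hp0
  have hapos : 0 < |a| := abs_pos.mpr ha0
  set P := p.map (algebraMap ℝ ℂ) with hP
  have hsplit : P.Splits :=
    IsAlgClosed.splits P
  have hPdeg : P.natDegree = d := by rw [hP, natDegree_map, hdeg]
  have hcard : Multiset.card P.roots = d := by
    rw [(splits_iff_card_roots).mp hsplit, hPdeg]
  set r : ℝ := (t / |a|) ^ ((1 : ℝ) / d) with hr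
  have hrnn : 0 ≤ r := Real.rpow_nonneg (div_nonneg ht (abs_nonneg a)) _
  have hrd : r ^ d = t / |a| := by
    rw [hr, ← Real.rpow_natCast ((t / |a|) ^ ((1:ℝ)/d)) d,
      ← Real.rpow_mul (div_nonneg ht (abs_nonneg a))]
    have hd0 : (d : ℝ) ≠ 0 := Nat.cast_ne_zero.mpr (by omega)
    rw [one_div, inv_mul_cancel₀ hd0, Real.rpow_one]
  have hfac : P = Polynomial.C P.leadingCoeff * (P.roots.map fun z => X - Polynomial.C z).prod :=
    hsplit.eq_prod_roots
  have hlc : P.leadingCoeff = (a : ℂ) := by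
    rw [hP, leadingCoeff_map]; rfl
  have habs : ∀ s : ℝ, |a| * (P.roots.map fun z => |s - z.re|).prod ≤ |p.eval s| := by
    intro s
    have h1 : P.eval (s : ℂ) = Complex.ofReal (p.eval s) := by
      rw [hP, eval_map, ← Complex.coe_algebraMap]
      exact eval₂_hom (algebraMap ℝ ℂ) s
    have h2 : ‖P.eval (s : ℂ)‖ = |p.eval s| := by
      rw [h1, Complex.norm_real, Real.norm_eq_abs]
    rw [← h2]
    conv_rhs => rw [hfac]
    rw [eval_mul, eval_C, norm_mul, hlc, Complex.norm_real, Real.norm_eq_abs, eval_multiset_prod,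
      Multiset.map_map]
    have hn := map_multiset_prod (normHom : ℂ →*₀ ℝ)
      (Multiset.map (eval (s : ℂ) ∘ fun z => X - Polynomial.C z) P.roots)
    simp only [normHom_apply] at hn
    rw [hn, Multiset.map_map]
    refine mul_le_mul_of_nonneg_left ?_ (abs_nonneg a)
    refine ms_prod_le _ _ _ (fun z _ => abs_nonneg _) ?_
    intro z _
    have : |s - z.re| = |((s : ℂ) - z).re| := by
      simp [Complex.sub_re, Complex.ofReal_re]
    rw [this]
    simpa using Complex.abs_re_le_norm ((s : ℂ) - z)
  have hsub : {s : ℝ | |p.eval s| ≤ t} ⊆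
      ⋃ z ∈ P.roots.toFinset, Set.Icc (z.re - r) (z.re + r) := by
    intro s hs
    have h3 : (P.roots.map fun z => |s - z.re|).prod ≤
        r ^ Multiset.card (P.roots.map fun z => |s - z.re|) := by
      rw [Multiset.card_map, hcard, hrd, le_div_iff₀ hapos]
      calc (P.roots.map fun z => |s - z.re|).prod * |a|
          = |a| * (P.roots.map fun z => |s - z.re|).prod := mul_comm _ _
        _ ≤ |p.eval s| := habs s
        _ ≤ t := hs
    have hM0 : (P.roots.map fun z => |s - z.re|) ≠ 0 :=
      Multiset.card_pos.mp (by rw [Multiset.card_map, hcard]; omega)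
    obtain ⟨x, hx, hxr⟩ := ms_exists_le r hrnn _ hM0 h3
    obtain ⟨z, hz, rfl⟩ := Multiset.mem_map.mp hx
    refine Set.mem_iUnion₂.mpr ⟨z, Multiset.mem_toFinset.mpr hz, ?_⟩
    have := abs_le.mp hxr
    exact Set.mem_Icc.mpr ⟨by linarith [this.1], by linarith [this.2]⟩
  calc volume {s : ℝ | |p.eval s| ≤ t}
      ≤ volume (⋃ z ∈ P.roots.toFinset, Set.Icc (z.re - r) (z.re + r)) := measure_mono hsub
    _ ≤ ∑ z ∈ P.roots.toFinset, volume (Set.Icc (z.re - r) (z.re + r)) :=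
        measure_biUnion_finset_le _ _
    _ = ∑ _z ∈ P.roots.toFinset, ENNReal.ofReal (2 * r) := by
        refine Finset.sum_congr rfl fun z _ => ?_
        rw [Real.volume_Icc]
        ring_nf
    _ = (P.roots.toFinset.card : ℝ≥0∞) * ENNReal.ofReal (2 * r) := by
        rw [Finset.sum_const, nsmul_eq_mul]
    _ ≤ (d : ℝ≥0∞) * ENNReal.ofReal (2 * r) := by
        gcongr
        exact_mod_cast (Multiset.toFinset_card_le _).trans_eq hcard
    _ = ENNReal.ofReal (2 * d * (t / |a|) ^ ((1 : ℝ) / d)) := by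
        rw [← ENNReal.ofReal_natCast d, ← ENNReal.ofReal_mul (by positivity)]
        congr 1
        rw [hr]
        ring


private lemma line_eval (n : ℕ) (f : MvPolynomial (Fin n) ℝ) (x e : Fin n → ℝ) (s : ℝ) :
    (MvPolynomial.aeval
        (fun i => Polynomial.C (e i) * Polynomial.X + Polynomial.C (x i)) f).eval s
      = MvPolynomial.eval (fun i => x i + e i * s) f := by
  induction f using MvPolynomial.induction_on with
  | C a => simp
  | add p q hp hq => simp [hp, hq]
  | mul_X p i hp =>
    rw [map_mul, MvPolynomial.aeval_X, eval_mul, hp, MvPolynomial.eval_mul,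
      MvPolynomial.eval_X, eval_add, eval_mul, eval_C, eval_C, eval_X]
    ring

private lemma line_prod_natDegree_le (n : ℕ) (x e : Fin n → ℝ) (α : Fin n →₀ ℕ) :
    (α.prod fun i k => (Polynomial.C (e i) * Polynomial.X + Polynomial.C (x i)) ^ k).natDegree
      ≤ α.sum fun _ k => k := by
  rw [Finsupp.prod, Finsupp.sum]
  refine (natDegree_prod_le _ _).trans ?_
  refine Finset.sum_le_sum fun i _ => ?_
  refine natDegree_pow_le.trans ?_
  calc α i * (Polynomial.C (e i) * Polynomial.X + Polynomial.C (x i)).natDegree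
      ≤ α i * 1 := Nat.mul_le_mul_left _ natDegree_linear_le
    _ = α i := mul_one _

private lemma line_prod_coeff (n : ℕ) (x e : Fin n → ℝ) (α : Fin n →₀ ℕ) :
    (α.prod fun i k => (Polynomial.C (e i) * Polynomial.X + Polynomial.C (x i)) ^ k).coeff
        (α.sum fun _ k => k) = α.prod fun i k => e i ^ k := by
  by_cases hall : ∀ i ∈ α.support, e i ≠ 0
  · have hlead : ∀ i ∈ α.support,
        (Polynomial.C (e i) * Polynomial.X + Polynomial.C (x i)).leadingCoeff = e i :=
      fun i hi => leadingCoeff_linear (hall i hi)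
    have hne : ∀ i ∈ α.support,
        (Polynomial.C (e i) * Polynomial.X + Polynomial.C (x i)) ^ α i ≠ 0 := by
      intro i hi
      refine pow_ne_zero _ (leadingCoeff_ne_zero.mp ?_)
      rw [hlead i hi]
      exact hall i hi
    have hdeg : (α.prod fun i k =>
        (Polynomial.C (e i) * Polynomial.X + Polynomial.C (x i)) ^ k).natDegree
        = α.sum fun _ k => k := by
      rw [Finsupp.prod, Finsupp.sum, natDegree_prod _ _ hne]
      refine Finset.sum_congr rfl fun i hi => ?_
      rw [natDegree_pow, natDegree_linear (hall i hi), mul_one]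
    rw [← hdeg, coeff_natDegree, Finsupp.prod, Finsupp.prod, leadingCoeff_prod]
    refine Finset.prod_congr rfl fun i hi => ?_
    rw [leadingCoeff_pow, hlead i hi]
  · push_neg at hall
    obtain ⟨i0, hi0, he0⟩ := hall
    have hrhs : (α.prod fun i k => e i ^ k) = 0 := by
      rw [Finsupp.prod]
      refine Finset.prod_eq_zero hi0 ?_
      rw [he0]
      exact zero_pow (Finsupp.mem_support_iff.mp hi0)
    rw [hrhs]
    refine coeff_eq_zero_of_natDegree_lt ?_
    rw [Finsupp.prod, Finsupp.sum]
    refine lt_of_le_of_lt (natDegree_prod_le _ _) ?_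
    refine Finset.sum_lt_sum (fun i _ => ?_) ⟨i0, hi0, ?_⟩
    · refine natDegree_pow_le.trans ?_
      calc α i * (Polynomial.C (e i) * Polynomial.X + Polynomial.C (x i)).natDegree
          ≤ α i * 1 := Nat.mul_le_mul_left _ natDegree_linear_le
        _ = α i := mul_one _
    · rw [he0]
      simp only [map_zero, zero_mul, zero_add, ← C_pow, natDegree_C]
      exact Finsupp.mem_support_iff.mp hi0 |> Nat.pos_of_ne_zero

private lemma hc_monomial (n : ℕ) (d : ℕ) (α : Fin n →₀ ℕ) (c : ℝ) :
    MvPolynomial.homogeneousComponent d (MvPolynomial.monomial α c)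
      = if α.degree = d then MvPolynomial.monomial α c else 0 := by
  ext β
  rw [MvPolynomial.coeff_homogeneousComponent]
  by_cases hβ : β = α
  · subst hβ
    split_ifs <;> simp_all [MvPolynomial.coeff_monomial]
  · split_ifs <;> simp [MvPolynomial.coeff_monomial, Ne.symm hβ]

private lemma line_coeff_totalDegree (n : ℕ) (f : MvPolynomial (Fin n) ℝ) (x e : Fin n → ℝ) :
    (MvPolynomial.aeval
        (fun i => Polynomial.C (e i) * Polynomial.X + Polynomial.C (x i)) f).coeff f.totalDegree
      = MvPolynomial.eval e (MvPolynomial.homogeneousComponent f.totalDegree f) := by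
  set d := f.totalDegree with hd
  set u : Fin n → ℝ[X] := fun i => Polynomial.C (e i) * Polynomial.X + Polynomial.C (x i) with hu
  have key : ∀ α ∈ f.support,
      ((MvPolynomial.aeval u) (MvPolynomial.monomial α (MvPolynomial.coeff α f))).coeff d
        = MvPolynomial.eval e
            (MvPolynomial.homogeneousComponent d (MvPolynomial.monomial α (MvPolynomial.coeff α f))) := by
    intro α hα
    have hle : (α.sum fun _ k => k) ≤ d := MvPolynomial.le_totalDegree hα
    have hdegα : α.degree = α.sum fun _ k => k := by rw [Finsupp.degree_apply, Finsupp.sum]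
    rw [MvPolynomial.aeval_monomial, hc_monomial]
    by_cases hq : (α.sum fun _ k => k) = d
    · rw [if_pos (hdegα.trans hq), MvPolynomial.eval_monomial, Polynomial.algebraMap_eq,
        coeff_C_mul, ← hq, line_prod_coeff]
    · rw [if_neg (fun h => hq (hdegα.symm.trans h)), map_zero, Polynomial.algebraMap_eq,
        coeff_C_mul, coeff_eq_zero_of_natDegree_lt
          (lt_of_le_of_lt (line_prod_natDegree_le n x e α) (lt_of_le_of_ne hle hq)), mul_zero]
  calc ((MvPolynomial.aeval u) f).coeff d
      = ((MvPolynomial.aeval u)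
          (∑ α ∈ f.support, MvPolynomial.monomial α (MvPolynomial.coeff α f))).coeff d := by
        rw [MvPolynomial.support_sum_monomial_coeff]
    _ = ∑ α ∈ f.support, ((MvPolynomial.aeval u) (MvPolynomial.monomial α (MvPolynomial.coeff α f))).coeff d := by
        rw [map_sum, Polynomial.finset_sum_coeff]
    _ = ∑ α ∈ f.support, MvPolynomial.eval e
          (MvPolynomial.homogeneousComponent d (MvPolynomial.monomial α (MvPolynomial.coeff α f))) :=
        Finset.sum_congr rfl key
    _ = MvPolynomial.eval e (MvPolynomial.homogeneousComponent d f) := by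
        rw [← map_sum, ← map_sum, MvPolynomial.support_sum_monomial_coeff]

private lemma line_natDegree_le (n : ℕ) (f : MvPolynomial (Fin n) ℝ) (x e : Fin n → ℝ) :
    (MvPolynomial.aeval
        (fun i => Polynomial.C (e i) * Polynomial.X + Polynomial.C (x i)) f).natDegree
      ≤ f.totalDegree := by
  set u : Fin n → ℝ[X] := fun i => Polynomial.C (e i) * Polynomial.X + Polynomial.C (x i) with hu
  conv_lhs => rw [← MvPolynomial.support_sum_monomial_coeff f]
  rw [map_sum]
  refine natDegree_sum_le_of_forall_le _ _ fun α hα => ?_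
  rw [MvPolynomial.aeval_monomial, Polynomial.algebraMap_eq]
  refine (natDegree_C_mul_le _ _).trans ?_
  exact (line_prod_natDegree_le n x e α).trans (MvPolynomial.le_totalDegree hα)


/-- upper bound `Vol{x ∈ A : |f(x)| ≤ t} ≤ C t^{1/d}` for a nonzero
polynomial `f` of degree `d` and a bounded set `A ⊆ ℝⁿ`. -/
theorem sublevel_volume_upper_bound (n d : ℕ) (f : MvPolynomial (Fin n) ℝ)
    (hf : f ≠ 0) (hd : f.totalDegree = d)
    (A : Set (Fin n → ℝ)) (hA : Bornology.IsBounded A) :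
    ∃ C : ℝ, 0 < C ∧ ∀ t : ℝ, 0 ≤ t →
      volume {x ∈ A | |MvPolynomial.eval x f| ≤ t} ≤
        ENNReal.ofReal (C * t ^ ((1 : ℝ) / d)) := by
  obtain ⟨R0, hR0⟩ := hA.subset_closedBall 0
  have hR0' : A ⊆ Metric.closedBall 0 (max R0 0) :=
    hR0.trans (Metric.closedBall_subset_closedBall (le_max_left _ _))
  set R : ℝ := max R0 0 with hR
  have hRnn : 0 ≤ R := le_max_right _ _
  clear hR0
  rcases Nat.eq_zero_or_pos d with hd0 | hd1
  · -- degree-zero (constant) case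
    subst hd0
    set a : ℝ := MvPolynomial.coeff 0 f with ha
    have hfC : f = MvPolynomial.C a := by
      ext β
      by_cases hβ : β = 0
      · subst hβ; simp [ha, MvPolynomial.coeff_C]
      · rw [MvPolynomial.coeff_C, if_neg (Ne.symm hβ)]
        by_contra hc
        have hβs : β ∈ f.support := MvPolynomial.mem_support_iff.mpr hc
        have hz := (MvPolynomial.totalDegree_eq_zero_iff _ f).mp hd β hβs
        exact hβ (Finsupp.ext fun i => hz i)
    have ha0 : a ≠ 0 := fun h => hf (by rw [hfC, h, map_zero])
    have hfin : volume (Metric.closedBall (0 : Fin n → ℝ) R) ≠ ⊤ :=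
      (isCompact_closedBall _ _).measure_lt_top.ne
    refine ⟨(volume (Metric.closedBall (0 : Fin n → ℝ) R)).toReal + 1, by positivity, ?_⟩
    intro t ht
    have hexp : ((1 : ℝ) / ((0 : ℕ) : ℝ)) = 0 := by norm_num
    rw [hexp, Real.rpow_zero, mul_one]
    by_cases hta : |a| ≤ t
    · refine (measure_mono fun y hy => hR0' hy.1).trans ?_
      calc volume (Metric.closedBall (0 : Fin n → ℝ) R)
          = ENNReal.ofReal (volume (Metric.closedBall (0 : Fin n → ℝ) R)).toReal :=
            (ENNReal.ofReal_toReal hfin).symm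
        _ ≤ ENNReal.ofReal ((volume (Metric.closedBall (0 : Fin n → ℝ) R)).toReal + 1) :=
            ENNReal.ofReal_le_ofReal (by linarith)
    · have hempty : {x ∈ A | |MvPolynomial.eval x f| ≤ t} = ∅ := by
        ext y
        simp only [Set.mem_setOf_eq, Set.mem_empty_iff_false, iff_false, not_and]
        intro _
        rw [hfC, MvPolynomial.eval_C]
        intro h; exact hta h
      rw [hempty, measure_empty]
      exact zero_le
  · -- main case : d ≥ 1
    -- the top homogeneous component is nonzero
    set H : MvPolynomial (Fin n) ℝ := MvPolynomial.homogeneousComponent d f with hH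
    obtain ⟨α₀, hα₀mem, hα₀⟩ := Finset.exists_mem_eq_sup f.support
      (MvPolynomial.support_nonempty.mpr hf) (fun s => s.sum fun _ k => k)
    have hα₀d : (α₀.sum fun _ k => k) = d := by rw [← hα₀, ← MvPolynomial.totalDegree, hd]
    have hdeg0 : α₀.degree = d := by
      rw [Finsupp.degree_apply, ← hα₀d, Finsupp.sum]
    have hHne : H ≠ 0 := by
      intro h0
      have hcoeff := MvPolynomial.coeff_homogeneousComponent (n := d) (φ := f) α₀
      have : MvPolynomial.coeff α₀ f = 0 := by
        rw [← hH, h0, if_pos hdeg0] at hcoeff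
        simpa using hcoeff.symm
      exact MvPolynomial.mem_support_iff.mp hα₀mem this
    have hα₀ne : α₀ ≠ 0 := by
      intro h0
      rw [h0, Finsupp.sum_zero_index] at hα₀d
      omega
    obtain ⟨i₀, hi₀⟩ := Finsupp.support_nonempty_iff.mpr hα₀ne
    obtain ⟨m, rfl⟩ : ∃ m, n = m + 1 := ⟨n - 1, by have := i₀.pos; omega⟩
    -- choose a direction e with eval e H ≠ 0 and e 0 ≠ 0
    have hmul : H * MvPolynomial.X 0 ≠ 0 := mul_ne_zero hHne (MvPolynomial.X_ne_zero 0)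
    obtain ⟨e, he⟩ : ∃ e : Fin (m+1) → ℝ, MvPolynomial.eval e (H * MvPolynomial.X 0) ≠ 0 := by
      by_contra hcon
      push_neg at hcon
      exact hmul (MvPolynomial.funext fun z => by rw [hcon z]; simp)
    rw [map_mul, MvPolynomial.eval_X] at he
    set c : ℝ := MvPolynomial.eval e H with hc
    have hc0 : c ≠ 0 := fun h => he (by rw [h, zero_mul])
    have he0 : e 0 ≠ 0 := fun h => he (by rw [h, mul_zero])
    have he0' : 0 < |e 0| := abs_pos.mpr he0
    -- the shear map
    set u0 : Fin (m+1) → ℝ := fun i => e i - (Pi.single (0 : Fin (m+1)) (1 : ℝ) : Fin (m+1) → ℝ) i with hu0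
    set M : Matrix (Fin (m+1)) (Fin (m+1)) ℝ :=
      1 + Matrix.replicateCol Unit u0 * Matrix.replicateRow Unit (Pi.single (0 : Fin (m+1)) (1 : ℝ) : Fin (m+1) → ℝ) with hM
    set T : (Fin (m+1) → ℝ) →ₗ[ℝ] (Fin (m+1) → ℝ) := Matrix.toLin' M with hT
    have hdet : LinearMap.det T = e 0 := by
      rw [hT, LinearMap.det_toLin', hM, Matrix.det_one_add_replicateCol_mul_replicateRow, single_dotProduct]
      simp [hu0]
    have hTapp : ∀ y : Fin (m+1) → ℝ, ∀ j, T y j = y j + u0 j * y 0 := by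
      intro y j
      rw [hT, Matrix.toLin'_apply, hM, Matrix.add_mulVec, Matrix.one_mulVec]
      have h2 : (Matrix.replicateCol Unit u0 * Matrix.replicateRow Unit (Pi.single (0 : Fin (m+1)) (1 : ℝ) : Fin (m+1) → ℝ)).mulVec y
          = fun i => u0 i * y 0 := by
        funext i
        rw [← Matrix.mulVec_mulVec]
        simp [Matrix.mulVec, dotProduct, Matrix.replicateRow_apply, Matrix.replicateCol_apply,
          Pi.single_apply]
      rw [h2]
      rfl
    -- the fiber polynomial
    set pw : (Fin m → ℝ) → ℝ[X] := fun w =>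
      MvPolynomial.aeval
        (fun i => Polynomial.C (e i) * Polynomial.X + Polynomial.C ((Fin.cons (0:ℝ) w : Fin (m+1) → ℝ) i)) f with hpw
    have hpwcoeff : ∀ w, (pw w).coeff d = c := by
      intro w
      rw [hpw]
      have := line_coeff_totalDegree (m+1) f (Fin.cons (0:ℝ) w) e
      rw [hd] at this
      exact this
    have hpwdeg : ∀ w, (pw w).natDegree = d := by
      intro w
      refine le_antisymm ?_ (le_natDegree_of_ne_zero (by rw [hpwcoeff w]; exact hc0))
      have := line_natDegree_le (m+1) f (Fin.cons (0:ℝ) w) e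
      rw [hd] at this
      exact this
    have hpwlead : ∀ w, (pw w).leadingCoeff = c := by
      intro w
      rw [leadingCoeff, hpwdeg w, hpwcoeff w]
    -- radii
    set Ra : ℝ := R / |e 0| with hRa
    have hRann : 0 ≤ Ra := div_nonneg hRnn he0'.le
    set R' : ℝ := R + Ra * (‖e‖ + 1) + 1 with hR'
    have hR'pos : 0 < R' := by
      have h1 : 0 ≤ Ra * (‖e‖ + 1) := mul_nonneg hRann (by positivity)
      rw [hR']
      linarith
    -- the measure of balls
    set V' : ℝ≥0∞ := volume (Metric.closedBall (0 : Fin m → ℝ) R') with hV'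
    have hV'fin : V' ≠ ⊤ := (isCompact_closedBall _ _).measure_lt_top.ne
    have hV'pos : 0 < V' := Metric.measure_closedBall_pos volume 0 hR'pos
    -- the constant
    refine ⟨|e 0| * V'.toReal * (2 * d * (|c|⁻¹ ^ ((1:ℝ)/d))), ?_, ?_⟩
    · have h1 : 0 < V'.toReal := ENNReal.toReal_pos hV'pos.ne' hV'fin
      have h2 : (0:ℝ) < d := by exact_mod_cast hd1
      have h3 : (0:ℝ) < |c|⁻¹ ^ ((1:ℝ)/d) := Real.rpow_pos_of_pos (by positivity) _
      positivity
    intro t ht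
    set S : Set (Fin (m+1) → ℝ) := {x ∈ A | |MvPolynomial.eval x f| ≤ t} with hS
    set E' : Set (Fin (m+1) → ℝ) :=
      {y | ‖y‖ ≤ R' ∧ |MvPolynomial.eval (T y) f| ≤ t} with hE'
    have hsubE : T ⁻¹' S ⊆ E' := by
      intro y hy
      obtain ⟨hyA, hyt⟩ := hy
      have hTball : ∀ j, |T y j| ≤ R := by
        intro j
        have h1 : ‖T y‖ ≤ R := mem_closedBall_zero_iff.mp (hR0' hyA)
        calc |T y j| = ‖T y j‖ := (Real.norm_eq_abs _).symm
          _ ≤ ‖T y‖ := norm_le_pi_norm _ _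
          _ ≤ R := h1
      have hy0 : |y 0| ≤ Ra := by
        have hT0 : T y 0 = e 0 * y 0 := by
          rw [hTapp y 0]
          simp [hu0, Pi.single_eq_same]
          ring
        have := hTball 0
        rw [hT0, abs_mul] at this
        rw [hRa, le_div_iff₀ he0']
        calc |y 0| * |e 0| = |e 0| * |y 0| := mul_comm _ _
          _ ≤ R := this
      have hyj : ∀ j, |y j| ≤ R' := by
        intro j
        have hu0j : |u0 j| ≤ ‖e‖ + 1 := by
          have h1 : |e j| ≤ ‖e‖ := by
            rw [← Real.norm_eq_abs]
            exact norm_le_pi_norm _ _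
          have h2 : |(Pi.single (0 : Fin (m+1)) (1 : ℝ) : Fin (m+1) → ℝ) j| ≤ 1 := by
            rcases eq_or_ne j 0 with h | h
            · rw [h, Pi.single_eq_same]
              norm_num
            · rw [Pi.single_eq_of_ne h]
              norm_num
          calc |u0 j| ≤ |e j| + |(Pi.single (0 : Fin (m+1)) (1 : ℝ) : Fin (m+1) → ℝ) j| :=
                abs_sub _ _
            _ ≤ ‖e‖ + 1 := add_le_add h1 h2
        have heq : y j = T y j - u0 j * y 0 := by
          rw [hTapp y j]
          ring
        calc |y j| = |T y j - u0 j * y 0| := by rw [heq]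
          _ ≤ |T y j| + |u0 j * y 0| := abs_sub _ _
          _ ≤ R + (‖e‖ + 1) * Ra := by
              refine add_le_add (hTball j) ?_
              rw [abs_mul]
              exact mul_le_mul hu0j hy0 (abs_nonneg _) (by positivity)
          _ ≤ R' := by rw [hR']; nlinarith
      constructor
      · refine (pi_norm_le_iff_of_nonneg hR'pos.le).mpr fun j => ?_
        rw [Real.norm_eq_abs]
        exact hyj j
      · exact hyt
    have hcont : Continuous fun y : Fin (m+1) → ℝ => MvPolynomial.eval (T y) f :=
      (MvPolynomial.continuous_eval f).comp T.continuous_of_finiteDimensional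
    have hE'c : IsClosed E' := by
      rw [hE', Set.setOf_and]
      exact (isClosed_le continuous_norm continuous_const).inter
        (isClosed_le hcont.abs continuous_const)
    set ψ := MeasurableEquiv.piFinSuccAbove (fun _ : Fin (m+1) => ℝ) 0 with hψ
    have hψp := volume_preserving_piFinSuccAbove (fun _ : Fin (m+1) => ℝ) 0
    have himg : MeasurableSet (ψ '' E') := by
      rw [MeasurableEquiv.image_eq_preimage_symm]
      exact ψ.symm.measurable hE'c.measurableSet
    have hvol1 : volume E' = (volume : Measure (ℝ × (Fin m → ℝ))) (ψ '' E') := by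
      have h := MeasurePreserving.measure_preimage_equiv hψp (ψ '' E')
      rw [Set.preimage_image_eq E' ψ.injective] at h
      exact h
    have hvol2 : (volume : Measure (ℝ × (Fin m → ℝ))) (ψ '' E')
        = ∫⁻ w, volume ((fun s => (s, w)) ⁻¹' (ψ '' E')) ∂(volume : Measure (Fin m → ℝ)) := by
      rw [MeasureTheory.Measure.volume_eq_prod, MeasureTheory.Measure.prod_apply_symm himg]
    have hmem : ∀ (s : ℝ) (w : Fin m → ℝ), ((s, w) ∈ ψ '' E') ↔ ψ.symm (s, w) ∈ E' := by
      intro s w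
      rw [MeasurableEquiv.image_eq_preimage_symm]
      rfl
    have hy0 : ∀ (s : ℝ) (w : Fin m → ℝ), ψ.symm (s, w) 0 = s := by
      intro s w
      simp [hψ, MeasurableEquiv.piFinSuccAbove]
    have hysucc : ∀ (s : ℝ) (w : Fin m → ℝ) (j : Fin m), ψ.symm (s, w) j.succ = w j := by
      intro s w j
      simp [hψ, MeasurableEquiv.piFinSuccAbove]
    have hTy : ∀ (s : ℝ) (w : Fin m → ℝ),
        T (ψ.symm (s, w)) = fun i => (Fin.cons (0:ℝ) w : Fin (m+1) → ℝ) i + e i * s := by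
      intro s w
      funext i
      rw [hTapp]
      induction i using Fin.cases with
      | zero =>
        have hu00 : u0 0 = e 0 - 1 := by
          rw [hu0]
          simp [Pi.single_eq_same]
        rw [hy0, hu00, Fin.cons_zero]
        ring
      | succ j =>
        have hu0s : u0 j.succ = e j.succ := by
          rw [hu0]
          simp [Pi.single_eq_of_ne (Fin.succ_ne_zero j)]
        rw [hysucc, hy0, hu0s, Fin.cons_succ]
    have hfib : ∀ w : Fin m → ℝ, volume ((fun s => (s, w)) ⁻¹' (ψ '' E'))
        ≤ Set.indicator (Metric.closedBall (0 : Fin m → ℝ) R')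
            (fun _ => ENNReal.ofReal (2 * d * (t / |c|) ^ ((1:ℝ)/d))) w := by
      intro w
      by_cases hw : w ∈ Metric.closedBall (0 : Fin m → ℝ) R'
      · rw [Set.indicator_of_mem hw]
        have hsubf : (fun s => (s, w)) ⁻¹' (ψ '' E') ⊆ {s : ℝ | |(pw w).eval s| ≤ t} := by
          intro s hs
          have hyE : ψ.symm (s, w) ∈ E' := (hmem s w).mp hs
          have h2 := hyE.2
          rw [hTy s w] at h2
          rw [Set.mem_setOf_eq, hpw, line_eval]
          exact h2
        refine (measure_mono hsubf).trans ?_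
        have h3 := oneD (pw w) d (hpwdeg w) hd1 t ht
        rw [hpwlead w] at h3
        exact h3
      · rw [Set.indicator_of_notMem hw]
        have hemp : (fun s => (s, w)) ⁻¹' (ψ '' E') = ∅ := by
          ext s
          simp only [Set.mem_preimage, Set.mem_empty_iff_false, iff_false]
          intro hs
          have hyE : ψ.symm (s, w) ∈ E' := (hmem s w).mp hs
          refine hw (mem_closedBall_zero_iff.mpr ?_)
          refine (pi_norm_le_iff_of_nonneg hR'pos.le).mpr fun j => ?_
          calc ‖w j‖ = ‖ψ.symm (s, w) j.succ‖ := by rw [hysucc]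
            _ ≤ ‖ψ.symm (s, w)‖ := norm_le_pi_norm _ _
            _ ≤ R' := hyE.1
        rw [hemp, measure_empty]
    have hint : (∫⁻ w, volume ((fun s => (s, w)) ⁻¹' (ψ '' E'))
          ∂(volume : Measure (Fin m → ℝ)))
        ≤ ENNReal.ofReal (2 * d * (t / |c|) ^ ((1:ℝ)/d)) * V' := by
      refine (lintegral_mono hfib).trans ?_
      rw [lintegral_indicator_const measurableSet_closedBall]
    have hpre := Measure.addHaar_preimage_linearMap (μ := volume)
      (f := T) (by rw [hdet]; exact he0) S
    have hfinal : ENNReal.ofReal |e 0| * (ENNReal.ofReal (2 * d * (t / |c|) ^ ((1:ℝ)/d)) * V')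
        = ENNReal.ofReal (|e 0| * V'.toReal * (2 * d * |c|⁻¹ ^ ((1:ℝ)/d)) * t ^ ((1:ℝ)/d)) := by
      conv_lhs => rw [← ENNReal.ofReal_toReal hV'fin]
      rw [← ENNReal.ofReal_mul (by positivity : (0:ℝ) ≤ 2 * d * (t / |c|) ^ ((1:ℝ)/d)),
        ← ENNReal.ofReal_mul (abs_nonneg _)]
      congr 1
      rw [div_eq_mul_inv, Real.mul_rpow ht (inv_nonneg.mpr (abs_nonneg c))]
      ring
    calc volume S
        = (ENNReal.ofReal |e 0| * ENNReal.ofReal |(e 0)⁻¹|) * volume S := by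
          rw [← ENNReal.ofReal_mul (abs_nonneg _), ← abs_mul, mul_inv_cancel₀ he0, abs_one,
            ENNReal.ofReal_one, one_mul]
      _ = ENNReal.ofReal |e 0| * (ENNReal.ofReal |(e 0)⁻¹| * volume S) := mul_assoc _ _ _
      _ = ENNReal.ofReal |e 0| * volume (T ⁻¹' S) := by rw [hpre, hdet]
      _ ≤ ENNReal.ofReal |e 0| * volume E' := mul_le_mul_right (measure_mono hsubE) _
      _ = ENNReal.ofReal |e 0| * (volume : Measure (ℝ × (Fin m → ℝ))) (ψ '' E') := by rw [hvol1]
      _ = ENNReal.ofReal |e 0| * ∫⁻ w, volume ((fun s => (s, w)) ⁻¹' (ψ '' E'))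
            ∂(volume : Measure (Fin m → ℝ)) := by rw [hvol2]
      _ ≤ ENNReal.ofReal |e 0| * (ENNReal.ofReal (2 * d * (t / |c|) ^ ((1:ℝ)/d)) * V') :=
          mul_le_mul_right hint _
      _ = ENNReal.ofReal (|e 0| * V'.toReal * (2 * d * |c|⁻¹ ^ ((1:ℝ)/d)) * t ^ ((1:ℝ)/d)) :=
          hfinal
end

section
/- Let f : ℝⁿ → ℝ be a nonzero polynomial of degree d and A a bounded subset of ℝⁿ such that f^{-1}(0) ∩ int A ≠ ∅. Then there exist constants C, C' > 0 such that C' tⁿ ≤ Vol({x ∈ A : |f(x)| ≤ t}) ≤ C t^{1/d} for all sufficiently small t ≥ 0. -/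
open MeasureTheory Polynomial
open scoped ENNReal NNReal

lemma multiset_prod_ge (M : Multiset ℂ) (g : ℂ → ℝ) (hg : ∀ z, 0 ≤ g z) (r : ℝ) (hr : 0 ≤ r)
    (h : ∀ z ∈ M, r ≤ g z) : r ^ Multiset.card M ≤ (M.map g).prod := by
  induction M using Multiset.induction_on with
  | empty => simp
  | cons a M ih =>
    simp only [Multiset.map_cons, Multiset.prod_cons, Multiset.card_cons, pow_succ]
    have h1 : r ≤ g a := h a (Multiset.mem_cons_self a M)
    have h2 : r ^ Multiset.card M ≤ (M.map g).prod := ih (fun z hz => h z (Multiset.mem_cons_of_mem hz))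
    calc r ^ Multiset.card M * r ≤ (M.map g).prod * g a := by
          apply mul_le_mul h2 h1 hr
          exact le_trans (pow_nonneg hr _) h2
      _ = g a * (M.map g).prod := mul_comm _ _

lemma norm_mprod (M : Multiset ℂ) : ‖M.prod‖ = (M.map (fun z => ‖z‖)).prod := by
  induction M using Multiset.induction_on with
  | empty => simp
  | cons a M ih => simp [norm_mul, ih]

lemma oneDim (p : ℝ[X]) (d : ℕ) (hd1 : 1 ≤ d) (hdeg : p.natDegree = d) (hp : p ≠ 0)
    (t : ℝ) (ht : 0 ≤ t) :
    volume {s : ℝ | |p.eval s| ≤ t} ≤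
      ENNReal.ofReal ((4 * d) * (t / |p.leadingCoeff|) ^ ((1:ℝ)/d)) := by
  set lc := p.leadingCoeff with hlc
  have hlc0 : lc ≠ 0 := leadingCoeff_ne_zero.mpr hp
  set r : ℝ := 2 * (t / |lc|) ^ ((1:ℝ)/d) with hr
  have hbase : 0 ≤ t / |lc| := div_nonneg ht (abs_nonneg _)
  have hrpos : 0 ≤ r := by positivity
  set q : ℂ[X] := p.map Complex.ofRealHom with hq
  have hq0 : q ≠ 0 := by
    simpa [hq, Polynomial.map_eq_zero_iff Complex.ofRealHom.injective] using hp
  have hqdeg : q.natDegree = d := by rw [hq, natDegree_map, hdeg]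
  have hsplits : Splits q := IsAlgClosed.splits q
  have hcard : Multiset.card q.roots = d := by
    rw [← hqdeg]; exact (splits_iff_card_roots).mp hsplits
  have hqlc : q.leadingCoeff = (lc : ℂ) := by
    rw [hq, leadingCoeff_map]; rfl
  -- key: evaluation formula
  have hevalq : ∀ s : ℝ, q.eval (s : ℂ) = ((p.eval s : ℝ) : ℂ) := by
    intro s
    simp only [hq, eval_map]
    exact Polynomial.eval₂_at_apply Complex.ofRealHom s
  -- inclusion
  have hsub : {s : ℝ | |p.eval s| ≤ t} ⊆
      ⋃ z ∈ q.roots.toFinset, Metric.closedBall z.re r := by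
    intro s hs
    simp only [Set.mem_setOf_eq] at hs
    by_cases h0 : p.eval s = 0
    · have hroot : (s : ℂ) ∈ q.roots := by
        rw [mem_roots hq0, IsRoot.def, hevalq, h0, Complex.ofReal_zero]
      refine Set.mem_biUnion (Multiset.mem_toFinset.mpr hroot) ?_
      simp [Metric.mem_closedBall, hrpos]
    · by_contra hcon
      simp only [Set.mem_iUnion, not_exists, Metric.mem_closedBall, Multiset.mem_toFinset] at hcon
      have hfar : ∀ z ∈ q.roots, r ≤ ‖(s:ℂ) - z‖ := by
        intro z hz
        have h1 : ¬ dist s z.re ≤ r := hcon z hz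
        have h2 : |s - z.re| = dist s z.re := by rw [Real.dist_eq]
        have h3 : |((s:ℂ) - z).re| ≤ ‖(s:ℂ) - z‖ := Complex.abs_re_le_norm _
        simp only [Complex.sub_re, Complex.ofReal_re] at h3
        rw [h2] at h3
        push_neg at h1
        linarith
      have heq : q = C q.leadingCoeff * (Multiset.map (fun a => X - C a) q.roots).prod :=
        hsplits.eq_prod_roots
      have hnorm : ‖q.eval (s:ℂ)‖ = |lc| * (q.roots.map (fun z => ‖(s:ℂ) - z‖)).prod := by
        conv_lhs => rw [heq]
        rw [eval_mul, eval_C, norm_mul, hqlc, Complex.norm_real, eval_multiset_prod]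
        congr 1
        rw [norm_mprod, Multiset.map_map, Multiset.map_map]
        congr 1
        ext z
        simp
      have hprod : r ^ d ≤ (q.roots.map (fun z => ‖(s:ℂ) - z‖)).prod := by
        rw [← hcard]
        exact multiset_prod_ge _ _ (fun z => norm_nonneg _) r hrpos hfar
      have hlow : |lc| * r ^ d ≤ |p.eval s| := by
        have hne : ‖q.eval (s:ℂ)‖ = |p.eval s| := by rw [hevalq]; exact Complex.norm_real _
        rw [← hne, hnorm]
        exact mul_le_mul_of_nonneg_left hprod (abs_nonneg _)
      have hrd : |lc| * r ^ d = 2^d * t := by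
        rw [hr, mul_pow]
        have h1 : ((t / |lc|) ^ ((1:ℝ)/d)) ^ d = t / |lc| := by
          rw [one_div]
          exact Real.rpow_inv_natCast_pow hbase (by omega)
        rw [h1]
        have : |lc| ≠ 0 := abs_ne_zero.mpr hlc0
        field_simp
      have ht0 : 0 < t := lt_of_lt_of_le (abs_pos.mpr h0) hs
      have h2d : (1:ℝ) < 2^d := one_lt_pow₀ (by norm_num) (by omega)
      nlinarith [le_trans hlow hs]
  calc volume {s : ℝ | |p.eval s| ≤ t}
      ≤ volume (⋃ z ∈ q.roots.toFinset, Metric.closedBall z.re r) := measure_mono hsub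
    _ ≤ ∑ z ∈ q.roots.toFinset, volume (Metric.closedBall z.re r) :=
        measure_biUnion_finset_le _ _
    _ = ∑ _z ∈ q.roots.toFinset, ENNReal.ofReal (2 * r) := by
        simp [Real.volume_closedBall]
    _ = (q.roots.toFinset.card : ℝ≥0∞) * ENNReal.ofReal (2 * r) := by
        rw [Finset.sum_const, nsmul_eq_mul]
    _ ≤ (d : ℝ≥0∞) * ENNReal.ofReal (2 * r) := by
        apply mul_le_mul_left
        exact_mod_cast le_trans (Multiset.toFinset_card_le _) (le_of_eq hcard)
    _ = ENNReal.ofReal ((4 * d) * (t / |p.leadingCoeff|) ^ ((1:ℝ)/d)) := by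
        rw [← ENNReal.ofReal_natCast d, ← ENNReal.ofReal_mul (by positivity)]
        congr 1
        rw [hr, ← hlc]
        ring

noncomputable def lineP {n : ℕ} (f : MvPolynomial (Fin n) ℝ) (a v : Fin n → ℝ) : Polynomial ℝ :=
  MvPolynomial.aeval (fun i => Polynomial.C (a i) + Polynomial.C (v i) * Polynomial.X) f

lemma lineP_eval {n : ℕ} (f : MvPolynomial (Fin n) ℝ) (a v : Fin n → ℝ) (s : ℝ) :
    (lineP f a v).eval s = MvPolynomial.eval (fun i => a i + v i * s) f := by
  induction f using MvPolynomial.induction_on with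
  | C c => simp [lineP]
  | add p q hp hq => simp only [lineP, map_add, eval_add] at *; rw [hp, hq]
  | mul_X p i hp => simp only [lineP, map_mul, eval_mul, MvPolynomial.aeval_X] at *
                    rw [hp]; simp

lemma coeff_prod_bound {ι : Type*} [DecidableEq ι] (s : Finset ι) (q : ι → Polynomial ℝ) (e : ι → ℕ)
    (h : ∀ i ∈ s, (q i).natDegree ≤ e i) :
    (∏ i ∈ s, q i).coeff (∑ i ∈ s, e i) = ∏ i ∈ s, (q i).coeff (e i) := by
  induction s using Finset.induction_on with
  | empty => simp
  | insert a s hi ih =>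
    rw [Finset.prod_insert hi, Finset.sum_insert hi,
      Polynomial.coeff_mul_add_eq_of_natDegree_le (h a (Finset.mem_insert_self a s))
        (le_trans (Polynomial.natDegree_prod_le _ _)
          (Finset.sum_le_sum (fun i hii => h i (Finset.mem_insert_of_mem hii)))),
      ih (fun i hii => h i (Finset.mem_insert_of_mem hii)), Finset.prod_insert hi]

lemma base_natDegree {a v : ℝ} : (Polynomial.C a + Polynomial.C v * Polynomial.X).natDegree ≤ 1 :=
  le_trans (natDegree_add_le _ _) (by simpa using natDegree_C_mul_le v X)

lemma base_pow_natDegree {a v : ℝ} (k : ℕ) :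
    ((Polynomial.C a + Polynomial.C v * Polynomial.X) ^ k).natDegree ≤ k := by
  calc _ ≤ k * (Polynomial.C a + Polynomial.C v * Polynomial.X).natDegree := natDegree_pow_le
    _ ≤ k * 1 := Nat.mul_le_mul_left k base_natDegree
    _ = k := Nat.mul_one k

lemma monline_natDegree {n : ℕ} (a v : Fin n → ℝ) (m : Fin n →₀ ℕ) (c : ℝ) :
    (MvPolynomial.aeval (fun i => Polynomial.C (a i) + Polynomial.C (v i) * Polynomial.X)
      (MvPolynomial.monomial m c)).natDegree ≤ m.sum fun _ k => k := by
  rw [MvPolynomial.aeval_monomial]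
  refine le_trans (natDegree_mul_le) ?_
  simp only [algebraMap_eq, natDegree_C, zero_add]
  refine le_trans (natDegree_prod_le _ _) ?_
  rw [Finsupp.sum]
  exact Finset.sum_le_sum fun i _ => base_pow_natDegree (m i)

lemma lineP_natDegree {n : ℕ} (f : MvPolynomial (Fin n) ℝ) (a v : Fin n → ℝ) :
    (lineP f a v).natDegree ≤ f.totalDegree := by
  conv_lhs => rw [lineP, f.as_sum, map_sum]
  refine natDegree_sum_le_of_forall_le _ _ fun m hm => ?_
  exact le_trans (monline_natDegree a v m _) (MvPolynomial.le_totalDegree hm)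

lemma lineP_coeff_top {n d : ℕ} (f : MvPolynomial (Fin n) ℝ) (a v : Fin n → ℝ)
    (hd : f.totalDegree ≤ d) :
    (lineP f a v).coeff d = MvPolynomial.eval v (MvPolynomial.homogeneousComponent d f) := by
  have hdeg_sum : ∀ m : Fin n →₀ ℕ, m.degree = m.sum fun _ e => e := by
    intro m; rw [Finsupp.degree_apply, Finsupp.sum]
  conv_lhs => rw [lineP, f.as_sum, map_sum]
  rw [Polynomial.finset_sum_coeff, MvPolynomial.homogeneousComponent_apply, map_sum]
  rw [Finset.sum_filter]
  refine Finset.sum_congr rfl fun m hm => ?_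
  by_cases hmd : m.degree = d
  · rw [if_pos hmd, MvPolynomial.aeval_monomial, MvPolynomial.eval_monomial]
    rw [Polynomial.algebraMap_eq, Polynomial.coeff_C_mul]
    congr 1
    have hsum : ∑ i ∈ m.support, m i = d := by
      rw [← hmd, Finsupp.degree_apply]
    rw [Finsupp.prod, ← hsum,
      coeff_prod_bound _ _ _ (fun i _ => base_pow_natDegree (m i))]
    rw [Finsupp.prod]
    refine Finset.prod_congr rfl fun i _ => ?_
    have h1 : ((Polynomial.C (a i) + Polynomial.C (v i) * Polynomial.X) ^ m i).coeff (m i * 1)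
        = ((Polynomial.C (a i) + Polynomial.C (v i) * Polynomial.X).coeff 1) ^ m i :=
      Polynomial.coeff_pow_of_natDegree_le base_natDegree
    rw [mul_one] at h1
    rw [h1]
    congr 1
    simp
  · rw [if_neg hmd]
    apply Polynomial.coeff_eq_zero_of_natDegree_lt
    refine lt_of_le_of_lt (monline_natDegree a v m _) ?_
    rw [← hdeg_sum]
    refine lt_of_le_of_ne ?_ hmd
    rw [hdeg_sum]
    exact le_trans (MvPolynomial.le_totalDegree hm) hd

lemma mvpoly_contDiff {n : ℕ} (f : MvPolynomial (Fin n) ℝ) :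
    ContDiff ℝ 1 (fun x : Fin n → ℝ => MvPolynomial.eval x f) := by
  induction f using MvPolynomial.induction_on with
  | C c => simpa using contDiff_const
  | add p q hp hq => simpa [MvPolynomial.eval_add] using hp.add hq
  | mul_X p i hp =>
    simp only [MvPolynomial.eval_mul, MvPolynomial.eval_X]
    exact hp.mul ((ContinuousLinearMap.proj i : (Fin n → ℝ) →L[ℝ] ℝ).contDiff)

lemma mvpoly_continuous {n : ℕ} (f : MvPolynomial (Fin n) ℝ) :
    Continuous (fun x : Fin n → ℝ => MvPolynomial.eval x f) :=
  (mvpoly_contDiff f).continuous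

/-- if the zero set of the nonzero degree-`d` polynomial `f` meets the
interior of the bounded set `A`, then `C' tⁿ ≤ Vol{x ∈ A : |f(x)| ≤ t} ≤ C t^{1/d}`
for all sufficiently small `t ≥ 0`. -/
theorem sublevel_volume_two_sided_bound (n d : ℕ) (f : MvPolynomial (Fin n) ℝ)
    (hf : f ≠ 0) (hd : f.totalDegree = d)
    (A : Set (Fin n → ℝ)) (hA : Bornology.IsBounded A)
    (hz : ({x : Fin n → ℝ | MvPolynomial.eval x f = 0} ∩ interior A).Nonempty) :
    ∃ C C' : ℝ, 0 < C ∧ 0 < C' ∧ ∃ t₀ : ℝ, 0 < t₀ ∧ ∀ t : ℝ, 0 ≤ t → t ≤ t₀ →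
      ENNReal.ofReal (C' * t ^ (n : ℝ)) ≤ volume {x ∈ A | |MvPolynomial.eval x f| ≤ t} ∧
      volume {x ∈ A | |MvPolynomial.eval x f| ≤ t} ≤
        ENNReal.ofReal (C * t ^ ((1 : ℝ) / d)) := by
  classical
  obtain ⟨a, haz, haA⟩ := hz
  simp only [Set.mem_setOf_eq] at haz
  -- d ≥ 1
  have hd1 : 1 ≤ d := by
    by_contra h
    have hd0 : f.totalDegree = 0 := by omega
    have hallm : ∀ m ∈ f.support, m = 0 := fun m hm =>
      Finsupp.ext fun i => (MvPolynomial.totalDegree_eq_zero_iff _ f).mp hd0 m hm i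
    have heval : MvPolynomial.eval a f = MvPolynomial.coeff 0 f := by
      rw [MvPolynomial.eval_eq]
      rcases Finset.eq_empty_or_nonempty f.support with hse | hse
      · exact absurd hse (Finset.nonempty_iff_ne_empty.mp (MvPolynomial.support_nonempty.mpr hf))
      · obtain ⟨m0, hm0⟩ := hse
        have hsm : f.support = {0} := by
          apply Finset.eq_singleton_iff_unique_mem.mpr
          exact ⟨(hallm m0 hm0) ▸ hm0, hallm⟩
        rw [hsm]
        simp
    rw [haz] at heval
    have hc0 : ∀ m : Fin n →₀ ℕ, MvPolynomial.coeff m f = 0 := by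
      intro m
      by_cases hm : m ∈ f.support
      · rw [hallm m hm]; exact heval.symm
      · exact MvPolynomial.notMem_support_iff.mp hm
    exact hf (MvPolynomial.ext _ _ fun m => by rw [hc0 m, MvPolynomial.coeff_zero])
  -- degree witness and n = m + 1
  have hsupp : f.support.Nonempty := MvPolynomial.support_nonempty.mpr hf
  obtain ⟨mw, hmw, hmwd⟩ : ∃ m ∈ f.support, (m.sum fun _ e => e) = d := by
    obtain ⟨m, hm, hm2⟩ := Finset.exists_mem_eq_sup f.support hsupp
      (fun m : Fin n →₀ ℕ => m.sum fun _ e => e)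
    exact ⟨m, hm, by rw [← hm2, ← MvPolynomial.totalDegree, hd]⟩
  obtain ⟨m, rfl⟩ : ∃ m, n = m + 1 := by
    rcases n with - | m
    · exfalso
      have : mw = 0 := Subsingleton.elim _ _
      rw [this] at hmwd; simp at hmwd; omega
    · exact ⟨m, rfl⟩
  -- the top homogeneous component and a good direction
  set H := MvPolynomial.homogeneousComponent d f with hH
  have hHne : H ≠ 0 := by
    intro h0
    have : MvPolynomial.coeff mw H = MvPolynomial.coeff mw f := by
      rw [hH, MvPolynomial.coeff_homogeneousComponent, if_pos]
      rw [Finsupp.degree_apply, ← hmwd, Finsupp.sum]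
    rw [h0] at this
    exact (MvPolynomial.mem_support_iff.mp hmw) (by simpa using this.symm)
  obtain ⟨v, hv⟩ : ∃ v : Fin (m+1) → ℝ, MvPolynomial.eval v H ≠ 0 := by
    by_contra h
    push_neg at h
    exact hHne (MvPolynomial.funext (fun x => by simpa using h x))
  obtain ⟨i0, hi0⟩ : ∃ i0, v i0 ≠ 0 := by
    by_contra h
    push_neg at h
    have hv0 : v = (0 : Fin (m+1) → ℝ) := funext h
    rw [hv0] at hv
    rw [MvPolynomial.eval_zero, hH] at hv
    apply hv
    rw [MvPolynomial.constantCoeff_eq]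
    rw [MvPolynomial.coeff_homogeneousComponent]
    rw [if_neg]
    simp [Finsupp.degree]
    omega
  set c := MvPolynomial.eval v H with hc
  -- the linear change of variables
  set M0 : Matrix (Fin (m+1)) (Fin (m+1)) ℝ := (1 : Matrix _ _ ℝ).updateCol i0 v with hM0
  set T : (Fin (m+1) → ℝ) →ₗ[ℝ] (Fin (m+1) → ℝ) := Matrix.toLin' M0 with hTdef
  have hdetM : M0.det = v i0 := by
    rw [hM0, ← Matrix.cramer_apply, Matrix.cramer_one]
    simp
  have hdetT : LinearMap.det T = v i0 := by rw [hTdef, LinearMap.det_toLin', hdetM]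
  have hdetT0 : LinearMap.det T ≠ 0 := by rw [hdetT]; exact hi0
  have hT : ∀ x : Fin (m+1) → ℝ, ∀ j, T x j = v j * x i0 + (if j = i0 then 0 else x j) := by
    intro x j
    rw [hTdef]
    show (M0.mulVec x) j = _
    simp only [Matrix.mulVec, dotProduct]
    rw [Finset.sum_eq_add_sum_sdiff_singleton_of_mem (Finset.mem_univ i0)]
    congr 1
    · simp [hM0, Matrix.updateCol_apply]
    · have hterm : ∀ k ∈ Finset.univ \ {i0}, M0 j k * x k = if j = k then x k else 0 := by
        intro k hk
        have hk0 : k ≠ i0 := by simpa using (Finset.mem_sdiff.mp hk).2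
        simp [hM0, Matrix.updateCol_apply, hk0, Matrix.one_apply, ite_mul]
      rw [Finset.sum_congr rfl hterm, Finset.sum_ite_eq]
      by_cases hj : j = i0 <;> simp [hj, Finset.mem_sdiff]
  have hTcont : Continuous T := T.continuous_of_finiteDimensional
  -- bounded box containing A
  obtain ⟨R₁, hR₁pos, hR₁⟩ := hA.subset_closedBall_lt 0 0
  set Box := Metric.closedBall (0 : Fin (m+1) → ℝ) R₁ with hBox
  have hvAbs : 0 < |v i0| := abs_pos.mpr hi0
  set R₂ := R₁ / |v i0| + R₁ + ‖v‖ * (R₁ / |v i0|) with hR₂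
  have hR₂pos : 0 < R₂ := by positivity
  have hxbound : ∀ x : Fin (m+1) → ℝ, T x ∈ Box → (∀ j, |x j| ≤ R₂) := by
    intro x hx
    have hnorm : ∀ j, |T x j| ≤ R₁ := by
      intro j
      have h1 : ‖T x j‖ ≤ ‖T x‖ := norm_le_pi_norm (T x) j
      have h2 : ‖T x‖ ≤ R₁ := by
        rw [hBox] at hx
        simpa [Metric.mem_closedBall, dist_zero_right] using hx
      rw [Real.norm_eq_abs] at h1
      linarith
    have hxi0 : |x i0| ≤ R₁ / |v i0| := by
      have h1 := hnorm i0
      rw [hT x i0, if_pos rfl, add_zero, abs_mul] at h1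
      rw [le_div_iff₀ hvAbs]
      linarith [mul_comm (|v i0|) (|x i0|)]
    intro j
    by_cases hj : j = i0
    · have hother : 0 ≤ R₁ + ‖v‖ * (R₁ / |v i0|) := by positivity
      rw [hR₂, hj]; linarith
    · have h1 := hnorm j
      rw [hT x j, if_neg hj] at h1
      have h2 : |x j| ≤ |v j * x i0 + x j| + |v j * x i0| := by
        have := abs_sub (v j * x i0 + x j) (v j * x i0)
        simpa using this
      have h3 : |v j * x i0| ≤ ‖v‖ * (R₁ / |v i0|) := by
        rw [abs_mul]
        have hvj : |v j| ≤ ‖v‖ := by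
          have := norm_le_pi_norm v j
          rwa [Real.norm_eq_abs] at this
        exact mul_le_mul hvj hxi0 (abs_nonneg _) (norm_nonneg _)
      rw [hR₂]
      have : 0 ≤ R₁ / |v i0| := by positivity
      linarith
  -- Lipschitz data for the lower bound
  obtain ⟨K, U, hU, hlip⟩ := ((mvpoly_contDiff f).contDiffAt
    (x := a)).exists_lipschitzOnWith
  obtain ⟨ε, hε, hball⟩ : ∃ ε > 0, Metric.ball a ε ⊆ U ∩ interior A := by
    have hmem : U ∩ interior A ∈ nhds a :=
      Filter.inter_mem hU (isOpen_interior.mem_nhds haA)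
    exact Metric.mem_nhds_iff.mp hmem
  set L := max (K : ℝ) 1 with hLdef
  have hLpos : (0:ℝ) < L := lt_of_lt_of_le one_pos (le_max_right _ _)
  have haU : a ∈ U := (hball (Metric.mem_ball_self hε)).1
  -- constants
  have hcabs : 0 < |c| := abs_pos.mpr hv
  refine ⟨|v i0| * (2*R₂)^m * (4*d) / |c| ^ ((1:ℝ)/d), (2/L)^(m+1),
    by positivity, by positivity, L * (ε/2), by positivity, fun t ht htt => ?_⟩
  constructor
  · -- LOWER BOUND
    rcases eq_or_lt_of_le ht with h0 | h0
    · rw [← h0, Real.zero_rpow (by positivity : ((m+1:ℕ):ℝ) ≠ 0), mul_zero,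
        ENNReal.ofReal_zero]
      exact zero_le
    · set ρ := t / L with hρ
      have hρpos : 0 < ρ := div_pos h0 hLpos
      have hρε : ρ < ε := by
        rw [hρ, div_lt_iff₀ hLpos]
        calc t ≤ L * (ε/2) := htt
          _ < L * ε := by nlinarith
          _ = ε * L := mul_comm _ _
      have hsub : Metric.ball a ρ ⊆ {x ∈ A | |MvPolynomial.eval x f| ≤ t} := by
        intro x hx
        have hxball : x ∈ Metric.ball a ε := by
          simp only [Metric.mem_ball] at hx ⊢
          linarith
        have hxUA := hball hxball
        refine ⟨interior_subset hxUA.2, ?_⟩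
        have hdist := hlip.dist_le_mul x hxUA.1 a haU
        rw [Real.dist_eq, haz, sub_zero] at hdist
        calc |MvPolynomial.eval x f| ≤ K * dist x a := hdist
          _ ≤ L * ρ := by
              have h1 : (K:ℝ) ≤ L := le_max_left _ _
              have h2 : dist x a ≤ ρ := le_of_lt (Metric.mem_ball.mp hx)
              exact mul_le_mul h1 h2 dist_nonneg (le_trans (NNReal.coe_nonneg K) h1)
          _ = t := by rw [hρ]; field_simp
      calc ENNReal.ofReal ((2/L)^(m+1) * t ^ ((m+1:ℕ):ℝ))
          = volume (Metric.ball a ρ) := by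
            rw [Real.volume_pi_ball a hρpos, Fintype.card_fin]
            congr 1
            rw [Real.rpow_natCast, ← mul_pow]
            congr 1
            rw [hρ]
            field_simp
        _ ≤ volume {x ∈ A | |MvPolynomial.eval x f| ≤ t} := measure_mono hsub
  · -- UPPER BOUND
    set S := Box ∩ {x | |MvPolynomial.eval x f| ≤ t} with hS
    have hSclosed : IsClosed S :=
      (Metric.isClosed_closedBall).inter
        (isClosed_le (continuous_abs.comp (mvpoly_continuous f)) continuous_const)
    have hsubS : {x ∈ A | |MvPolynomial.eval x f| ≤ t} ⊆ S :=
      fun x hx => ⟨hR₁ hx.1, hx.2⟩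
    set P := T ⁻¹' S with hP
    have hPclosed : IsClosed P := hSclosed.preimage hTcont
    have key1 : volume S = ENNReal.ofReal (|v i0|) * volume P := by
      have h := MeasureTheory.Measure.addHaar_preimage_linearMap volume hdetT0 S
      rw [hP, h, hdetT, ← mul_assoc, ← ENNReal.ofReal_mul (abs_nonneg _), abs_inv,
        mul_inv_cancel₀ (abs_ne_zero.mpr hi0), ENNReal.ofReal_one, one_mul]
    -- Fubini setup
    set e := MeasurableEquiv.piFinSuccAbove (fun _ : Fin (m+1) => ℝ) i0 with he
    set Q := e.symm ⁻¹' P with hQ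
    have hQmeas : MeasurableSet Q := e.symm.measurable hPclosed.measurableSet
    have hPQ : volume P = volume Q := by
      have hmp := volume_preserving_piFinSuccAbove (fun _ : Fin (m+1) => ℝ) i0
      have hpre : e ⁻¹' Q = P := by
        ext x
        simp [hQ, Set.mem_preimage]
      rw [← hpre]
      exact hmp.measure_preimage hQmeas.nullMeasurableSet
    -- sections are line sublevel sets
    have hesymm : ∀ (s : ℝ) (y : Fin m → ℝ), e.symm (s, y) = i0.insertNth s y := by
      intro s y
      rfl
    set w : (Fin m → ℝ) → (Fin (m+1) → ℝ) := fun y => i0.insertNth 0 y with hw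
    have hTline : ∀ (s : ℝ) (y : Fin m → ℝ),
        T (i0.insertNth s y) = fun j => w y j + v j * s := by
      intro s y
      funext j
      rw [hT]
      by_cases hj : j = i0
      · rw [hj]
        simp [hw, Fin.insertNth_apply_same]
      · obtain ⟨j', hj'⟩ := Fin.exists_succAbove_eq hj
        rw [if_neg hj, ← hj']
        simp [hw, Fin.insertNth_apply_succAbove]
        ring
    have hline : ∀ (s : ℝ) (y : Fin m → ℝ),
        MvPolynomial.eval (T (i0.insertNth s y)) f = (lineP f (w y) v).eval s := by
      intro s y
      rw [hTline s y, lineP_eval]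
    -- properties of the line polynomials
    have hpytop : ∀ y : Fin m → ℝ, (lineP f (w y) v).coeff d = c := by
      intro y
      rw [lineP_coeff_top f (w y) v (le_of_eq hd), hc, hH]
    have hpynd : ∀ y : Fin m → ℝ, (lineP f (w y) v).natDegree = d := by
      intro y
      refine le_antisymm (le_trans (lineP_natDegree f (w y) v) (le_of_eq hd)) ?_
      exact Polynomial.le_natDegree_of_ne_zero (by rw [hpytop y]; exact hv)
    have hpyne : ∀ y : Fin m → ℝ, lineP f (w y) v ≠ 0 := by
      intro y
      intro h0
      apply hv
      rw [← hpytop y, h0, Polynomial.coeff_zero]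
    have hpylc : ∀ y : Fin m → ℝ, (lineP f (w y) v).leadingCoeff = c := by
      intro y
      rw [Polynomial.leadingCoeff, hpynd y, hpytop y]
    -- per-section bound
    set Bt := ENNReal.ofReal ((4*d) * (t/|c|) ^ ((1:ℝ)/d)) with hBt
    have hsecsub : ∀ y : Fin m → ℝ,
        ((fun s : ℝ => (s, y)) ⁻¹' Q) ⊆ {s : ℝ | |(lineP f (w y) v).eval s| ≤ t} := by
      intro y s hs
      have hsP : (i0.insertNth s y) ∈ P := by
        rw [← hesymm s y]
        exact hs
      have h2 := (Set.mem_preimage.mp hsP).2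
      rw [Set.mem_setOf_eq, ← hline s y]
      exact h2
    have hsecbound : ∀ y : Fin m → ℝ,
        volume ((fun s : ℝ => (s, y)) ⁻¹' Q) ≤ Bt := by
      intro y
      refine le_trans (measure_mono (hsecsub y)) ?_
      have h1 := oneDim (lineP f (w y) v) d hd1 (hpynd y) (hpyne y) t ht
      rwa [hpylc y] at h1
    -- sections vanish outside a compact set of y's
    have hsecempty : ∀ y : Fin m → ℝ, y ∉ Metric.closedBall (0 : Fin m → ℝ) R₂ →
        ((fun s : ℝ => (s, y)) ⁻¹' Q) = ∅ := by
      intro y hy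
      rw [Set.eq_empty_iff_forall_notMem]
      intro s hs
      apply hy
      have hsP : (i0.insertNth s y) ∈ P := by
        rw [← hesymm s y]; exact hs
      have hbd := hxbound _ (Set.mem_preimage.mp hsP).1
      rw [Metric.mem_closedBall, dist_zero_right]
      rw [pi_norm_le_iff_of_nonneg hR₂pos.le]
      intro j
      rw [Real.norm_eq_abs]
      have := hbd (i0.succAbove j)
      rwa [Fin.insertNth_apply_succAbove] at this
    -- integrate
    have hQbound : volume Q ≤ Bt * ENNReal.ofReal ((2*R₂)^m) := by
      have hvol : volume Q = ∫⁻ y, volume ((fun s : ℝ => (s, y)) ⁻¹' Q) := by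
        rw [show (volume : Measure (ℝ × (Fin m → ℝ))) =
            (volume : Measure ℝ).prod (volume : Measure (Fin m → ℝ)) from rfl,
          MeasureTheory.Measure.prod_apply_symm hQmeas]
      rw [hvol]
      calc ∫⁻ y, volume ((fun s : ℝ => (s, y)) ⁻¹' Q)
          ≤ ∫⁻ y, (Metric.closedBall (0 : Fin m → ℝ) R₂).indicator (fun _ => Bt) y := by
            refine MeasureTheory.lintegral_mono fun y => ?_
            by_cases hy : y ∈ Metric.closedBall (0 : Fin m → ℝ) R₂
            · rw [Set.indicator_of_mem hy]
              exact hsecbound y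
            · rw [Set.indicator_of_notMem hy, hsecempty y hy]
              simp
        _ = Bt * volume (Metric.closedBall (0 : Fin m → ℝ) R₂) :=
            MeasureTheory.lintegral_indicator_const Metric.isClosed_closedBall.measurableSet _
        _ = Bt * ENNReal.ofReal ((2*R₂)^m) := by
            rw [Real.volume_pi_closedBall 0 hR₂pos.le, Fintype.card_fin]
    -- assemble
    calc volume {x ∈ A | |MvPolynomial.eval x f| ≤ t}
        ≤ volume S := measure_mono hsubS
      _ = ENNReal.ofReal (|v i0|) * volume P := key1
      _ = ENNReal.ofReal (|v i0|) * volume Q := by rw [hPQ]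
      _ ≤ ENNReal.ofReal (|v i0|) * (Bt * ENNReal.ofReal ((2*R₂)^m)) :=
          mul_le_mul_right hQbound _
      _ = ENNReal.ofReal (|v i0| * ((4*d) * (t/|c|) ^ ((1:ℝ)/d) * (2*R₂)^m)) := by
          rw [hBt, ← ENNReal.ofReal_mul (by positivity), ← ENNReal.ofReal_mul (abs_nonneg _)]
      _ = ENNReal.ofReal (|v i0| * (2*R₂)^m * (4*d) / |c| ^ ((1:ℝ)/d) * t ^ ((1:ℝ)/d)) := by
          have heq : |v i0| * ((4*d) * (t/|c|) ^ ((1:ℝ)/d) * (2*R₂)^m)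
              = |v i0| * (2*R₂)^m * (4*d) / |c| ^ ((1:ℝ)/d) * t ^ ((1:ℝ)/d) := by
            rw [Real.div_rpow ht (abs_nonneg c)]
            ring
          rw [heq]
end

section
/- Let f : ℝⁿ → ℝ be a polynomial and A a bounded subset of ℝⁿ. If there is a point a ∈ f^{-1}(0) ∩ int A with ord_a f = d', then there exists C'' > 0 such that Vol({x ∈ A : |f(x)| ≤ t}) ≥ C'' t^{n/d'} for all sufficiently small t ≥ 0. -/
open MeasureTheory

/-- The vanishing order of a multivariate polynomial `f` at a point `a`: the smallest
total degree of a monomial appearing in the Taylor expansion of `f` at `a`. -/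
noncomputable def ordAt {n : ℕ} (f : MvPolynomial (Fin n) ℝ) (a : Fin n → ℝ) : ℕ :=
  sInf {k | ∃ m ∈ (MvPolynomial.bind₁
      (fun i => MvPolynomial.X i + MvPolynomial.C (a i)) f).support,
    (m.sum fun _ e => e) = k}

lemma eval_bind₁_real {n : ℕ} (h : Fin n → MvPolynomial (Fin n) ℝ)
    (φ : MvPolynomial (Fin n) ℝ) (y : Fin n → ℝ) :
    MvPolynomial.eval y (MvPolynomial.bind₁ h φ) =
      MvPolynomial.eval (fun i => MvPolynomial.eval y (h i)) φ :=
  MvPolynomial.eval₂Hom_bind₁ (RingHom.id ℝ) y h φ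

lemma eval_abs_le_of_deg_ge {n : ℕ} (g : MvPolynomial (Fin n) ℝ) (d' : ℕ)
    (hdeg : ∀ m ∈ g.support, d' ≤ m.sum fun _ e => e)
    (y : Fin n → ℝ) (hy : ‖y‖ ≤ 1) :
    |MvPolynomial.eval y g| ≤ (∑ m ∈ g.support, |MvPolynomial.coeff m g|) * ‖y‖ ^ d' := by
  rw [MvPolynomial.eval_eq, Finset.sum_mul]
  refine (Finset.abs_sum_le_sum_abs _ _).trans (Finset.sum_le_sum fun m hm => ?_)
  rw [abs_mul]
  refine mul_le_mul_of_nonneg_left ?_ (abs_nonneg _)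
  calc |∏ i ∈ m.support, y i ^ m i| = ∏ i ∈ m.support, |y i| ^ m i := by
        rw [Finset.abs_prod]; simp [abs_pow]
    _ ≤ ∏ i ∈ m.support, ‖y‖ ^ m i := by
        refine Finset.prod_le_prod (fun i _ => by positivity) (fun i _ => ?_)
        exact pow_le_pow_left₀ (abs_nonneg _) (norm_le_pi_norm y i) _
    _ = ‖y‖ ^ (m.sum fun _ e => e) := by
        rw [Finset.prod_pow_eq_pow_sum]; rfl
    _ ≤ ‖y‖ ^ d' := pow_le_pow_of_le_one (norm_nonneg _) hy (hdeg m hm)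

/-- if `a ∈ f⁻¹(0) ∩ int A` has `ord_a f = d'`, then
`Vol{x ∈ A : |f(x)| ≤ t} ≥ C'' t^{n/d'}` for all sufficiently small `t ≥ 0`. -/
theorem sublevel_volume_lower_bound_of_point (n d' : ℕ) (hd' : 0 < d')
    (f : MvPolynomial (Fin n) ℝ)
    (A : Set (Fin n → ℝ)) (hA : Bornology.IsBounded A)
    (a : Fin n → ℝ) (ha0 : MvPolynomial.eval a f = 0) (haA : a ∈ interior A)
    (hord : ordAt f a = d') :
    ∃ C'' : ℝ, 0 < C'' ∧ ∃ t₀ : ℝ, 0 < t₀ ∧ ∀ t : ℝ, 0 ≤ t → t ≤ t₀ →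
      ENNReal.ofReal (C'' * t ^ ((n : ℝ) / d')) ≤
        volume {x ∈ A | |MvPolynomial.eval x f| ≤ t} := by
  classical
  set g := MvPolynomial.bind₁
      (fun i => MvPolynomial.X i + MvPolynomial.C (a i)) f with hg
  -- every monomial of g has degree ≥ d'
  have hdeg : ∀ m ∈ g.support, d' ≤ m.sum fun _ e => e := by
    intro m hm
    rw [← hord]
    exact Nat.sInf_le ⟨m, hm, rfl⟩
  set M : ℝ := (∑ m ∈ g.support, |MvPolynomial.coeff m g|) + 1 with hM
  have hMpos : 0 < M := by
    have : 0 ≤ ∑ m ∈ g.support, |MvPolynomial.coeff m g| :=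
      Finset.sum_nonneg fun m _ => abs_nonneg _
    linarith
  -- main analytic estimate
  have key : ∀ x : Fin n → ℝ, dist x a ≤ 1 →
      |MvPolynomial.eval x f| ≤ M * dist x a ^ d' := by
    intro x hx
    have hxf : MvPolynomial.eval x f = MvPolynomial.eval (x - a) g := by
      have hfun : (fun i => MvPolynomial.eval (x - a)
          (MvPolynomial.X i + MvPolynomial.C (a i))) = x := by
        funext i; simp
      rw [hg, eval_bind₁_real, hfun]
    rw [hxf, dist_eq_norm]
    refine (eval_abs_le_of_deg_ge g d' hdeg (x - a) ?_).trans ?_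
    · rwa [← dist_eq_norm]
    · refine mul_le_mul_of_nonneg_right ?_ (by positivity)
      simp [hM]
  -- geometric setup
  obtain ⟨ε₀, hε₀pos, hε₀⟩ := Metric.isOpen_iff.mp isOpen_interior a haA
  set ε : ℝ := min ε₀ 1 with hε
  have hεpos : 0 < ε := lt_min hε₀pos one_pos
  have hε1 : ε ≤ 1 := min_le_right _ _
  have hεA : Metric.ball a ε ⊆ A :=
    (Metric.ball_subset_ball (min_le_left _ _)).trans (hε₀.trans interior_subset)
  refine ⟨(2 : ℝ) ^ n / M ^ ((n : ℝ) / d'), by positivity, M * ε ^ d', by positivity,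
    fun t ht ht₀ => ?_⟩
  rcases eq_or_lt_of_le ht with rfl | htpos
  · -- t = 0
    rcases Nat.eq_zero_or_pos n with hn | hn
    · -- n = 0 : everything reduces to the single point a
      have hmem : Metric.ball a ε ⊆ {x ∈ A | |MvPolynomial.eval x f| ≤ 0} := by
        intro x hx
        have hxa : x = a := by
          subst hn; exact Subsingleton.elim x a
        refine ⟨hεA hx, ?_⟩
        rw [hxa, ha0]; simp
      refine le_trans ?_ (measure_mono hmem)
      rw [Real.volume_pi_ball a hεpos]
      apply ENNReal.ofReal_le_ofReal
      rw [Fintype.card_fin, hn]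
      simp [Real.zero_rpow, hn, Real.rpow_natCast]
    · have : (0:ℝ) ^ ((n : ℝ) / d') = 0 := by
        apply Real.zero_rpow
        positivity
      simp [this]
  · -- t > 0
    set r : ℝ := (t / M) ^ ((1 : ℝ) / d') with hr
    have hrpos : 0 < r := Real.rpow_pos_of_pos (by positivity) _
    have hrd : r ^ d' = t / M := by
      rw [hr, ← Real.rpow_natCast ((t / M) ^ ((1:ℝ)/d')) d', ← Real.rpow_mul (by positivity)]
      rw [one_div, inv_mul_cancel₀ (by exact_mod_cast hd'.ne')]
      simp
    have hrε : r ≤ ε := by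
      have h1 : r ^ d' ≤ ε ^ d' := by
        rw [hrd, div_le_iff₀ hMpos, mul_comm]
        exact ht₀
      exact le_of_pow_le_pow_left₀ hd'.ne' hεpos.le h1
    have hsub : Metric.ball a r ⊆ {x ∈ A | |MvPolynomial.eval x f| ≤ t} := by
      intro x hx
      have hxr : dist x a < r := hx
      have hx1 : dist x a ≤ 1 := le_trans hxr.le (hrε.trans hε1)
      refine ⟨hεA (lt_of_lt_of_le hxr hrε), ?_⟩
      calc |MvPolynomial.eval x f| ≤ M * dist x a ^ d' := key x hx1
        _ ≤ M * r ^ d' := by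
            refine mul_le_mul_of_nonneg_left ?_ hMpos.le
            exact pow_le_pow_left₀ dist_nonneg hxr.le _
        _ = t := by rw [hrd]; field_simp
    refine le_trans ?_ (measure_mono hsub)
    rw [Real.volume_pi_ball a hrpos]
    apply ENNReal.ofReal_le_ofReal
    rw [Fintype.card_fin]
    have : (2 * r) ^ n = 2 ^ n * (t ^ ((n:ℝ)/d') / M ^ ((n:ℝ)/d')) := by
      rw [mul_pow, hr, ← Real.rpow_natCast ((t/M) ^ ((1:ℝ)/d')) n,
        ← Real.rpow_mul (by positivity), ← Real.div_rpow ht hMpos.le]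
      ring_nf
    rw [this]
    rw [div_mul_eq_mul_div, mul_div_assoc]
end

section
/- Van der Corput's lemma: let f : (a,b) → ℝ be a C¹ function and t > 0. Suppose |f'(x)| ≥ t for all x ∈ (a,b) and f' is monotonic on (a,b). Then |∫_a^b e^{iλ f(x)} dx| ≤ 3 (λ t)^{-1} for all λ > 0. -/
/-!
With `φ = exp (i λ f)` we have `φ' = i λ f' φ`, so `∫ φ = (i λ)⁻¹ ∫ G φ'` with `G = 1 / f'`.
Writing `G x = ∫_0^∞ 1[y < G x] dy` and swapping the integrals, `∫ G φ'` becomes the integral over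
`y ∈ (0, 1/t)` of `∫ φ'` over the superlevel sets `{G > y}`. These are intervals because `f'` is
monotone, so by the fundamental theorem of calculus each inner integral is a difference of two
values of `φ` and has modulus at most `2`; this gives the bound `2 / (λ t)`. By Darboux's theorem
`f'` has constant sign, and complex conjugation reduces `f' < 0` to `f' > 0`.
-/

open MeasureTheory Set

section
variable {E : Type*} [NormedAddCommGroup E]

theorem integrableOn_Ioi_indicator_Iio (g : ℝ) (c : E) :
    IntegrableOn ((Iio g).indicator fun _ => c) (Ioi 0) := by
  rw [IntegrableOn, integrable_indicator_iff measurableSet_Iio,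
    IntegrableOn, Measure.restrict_restrict measurableSet_Iio, Iio_inter_Ioi]
  exact integrableOn_const (by simp)

variable [NormedSpace ℝ E] [CompleteSpace E]

theorem norm_setIntegral_Ioo_le_of_hasDerivAt {φ ψ : ℝ → E} {a b C : ℝ} (hC : 0 ≤ C)
    (hφ : ∀ x ∈ Ioo a b, ‖φ x‖ ≤ C) (hd : ∀ x ∈ Ioo a b, HasDerivAt φ (ψ x) x) :
    ‖∫ x in Ioo a b, ψ x‖ ≤ 2 * C := by
  by_cases hψ : IntegrableOn ψ (Ioo a b)
  swap
  · rw [integral_undef hψ, norm_zero]; positivity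
  rcases le_or_gt b a with hba | hab
  · rw [Ioo_eq_empty hba.not_gt, Measure.restrict_empty, integral_zero_measure, norm_zero]
    positivity
  set F : ℝ → E := fun v => ∫ x in a..v, ψ x
  have hψ' : IntegrableOn ψ (uIcc a b) := by
    rwa [uIcc_of_le hab.le, integrableOn_Icc_iff_integrableOn_Ioo]
  have hF : ContinuousOn F (Icc a b) := by
    simpa only [uIcc_of_le hab.le] using intervalIntegral.continuousOn_primitive_interval hψ'
  have hFTC : ∀ u ∈ Ioo a b, ∀ v ∈ Ioo a b, ‖F v - F u‖ ≤ 2 * C := by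
    intro u hu v hv
    have hsub : uIcc u v ⊆ Ioo a b := ordConnected_Ioo.uIcc_subset hu hv
    have hsub' : ∀ w ∈ Ioo a b, uIcc a w ⊆ uIcc a b := fun w hw =>
      uIcc_subset_uIcc_left (Ioo_subset_Icc_self.trans (uIcc_of_le hab.le).symm.subset hw)
    rw [intervalIntegral.integral_interval_sub_left
        ((hψ'.mono_set (hsub' v hv)).intervalIntegrable)
        ((hψ'.mono_set (hsub' u hu)).intervalIntegrable),
      intervalIntegral.integral_eq_sub_of_hasDerivAt (fun x hx => hd x (hsub hx))
        ((hψ.mono_set hsub).intervalIntegrable)]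
    calc ‖φ v - φ u‖ ≤ ‖φ v‖ + ‖φ u‖ := norm_sub_le _ _
      _ ≤ 2 * C := by linarith [hφ v hv, hφ u hu]
  -- `φ` need not have limits at `a` and `b`, but the primitive `F` is continuous up to them.
  have hab' : (a, b) ∈ Icc a b ×ˢ Icc a b := ⟨left_mem_Icc.2 hab.le, right_mem_Icc.2 hab.le⟩
  have hmem : (a, b) ∈ closure (Ioo a b ×ˢ Ioo a b) := by
    rwa [closure_prod_eq, closure_Ioo hab.ne]
  have hcont : ContinuousWithinAt (fun q : ℝ × ℝ => ‖F q.2 - F q.1‖) (Ioo a b ×ˢ Ioo a b) (a, b) :=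
    (((hF.comp continuousOn_snd fun q hq => hq.2).sub
      (hF.comp continuousOn_fst fun q hq => hq.1)).norm _ hab').mono
      (prod_mono Ioo_subset_Icc_self Ioo_subset_Icc_self)
  have := hcont.closure_le hmem continuousWithinAt_const fun q hq => hFTC q.1 hq.1 q.2 hq.2
  simpa [F, intervalIntegral.integral_of_le hab.le, integral_Ioc_eq_integral_Ioo] using this

theorem norm_setIntegral_le_of_ordConnected {φ ψ : ℝ → E} {W : Set ℝ} {C : ℝ} (hC : 0 ≤ C)
    (hW : W.OrdConnected) (hWb : BddBelow W) (hWa : BddAbove W)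
    (hφ : ∀ x ∈ W, ‖φ x‖ ≤ C) (hd : ∀ x ∈ W, HasDerivAt φ (ψ x) x) :
    ‖∫ x in W, ψ x‖ ≤ 2 * C := by
  rcases W.eq_empty_or_nonempty with rfl | hne
  · rw [Measure.restrict_empty, integral_zero_measure, norm_zero]; positivity
  have hIoo : Ioo (sInf W) (sSup W) ⊆ W :=
    IsConnected.Ioo_csInf_csSup_subset ⟨hne, hW.isPreconnected⟩ hWb hWa
  have hae : W =ᵐ[volume] Ioo (sInf W) (sSup W) := by
    refine ae_eq_set.2
      ⟨measure_mono_null ?_ (ae_eq_set.1 (Ioo_ae_eq_Icc (a := sInf W) (b := sSup W))).2, ?_⟩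
    · exact sdiff_subset_sdiff_left (subset_Icc_csInf_csSup hWb hWa)
    · rw [sdiff_eq_empty.2 hIoo, measure_empty]
  rw [setIntegral_congr_set hae]
  exact norm_setIntegral_Ioo_le_of_hasDerivAt hC (fun x hx => hφ x (hIoo hx))
    (fun x hx => hd x (hIoo hx))

theorem setIntegral_Ioi_indicator_Iio {g : ℝ} (hg : 0 ≤ g) (c : E) :
    ∫ y in Ioi 0, (Iio g).indicator (fun _ => c) y = g • c := by
  rw [integral_indicator measurableSet_Iio, Measure.restrict_restrict measurableSet_Iio,
    Iio_inter_Ioi, setIntegral_const, Real.volume_real_Ioo_of_le hg, sub_zero]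

variable {α : Type*} [MeasurableSpace α] {μ : Measure α}

theorem integral_smul_eq_integral_setIntegral_lt [SFinite μ] {G : α → ℝ} {ψ : α → E}
    (hG : AEMeasurable G μ) (hψ : AEStronglyMeasurable ψ μ) (hG0 : ∀ᵐ x ∂μ, 0 ≤ G x)
    (hint : Integrable (fun x => G x • ψ x) μ) :
    ∫ x, G x • ψ x ∂μ = ∫ y in Ioi 0, ∫ x in {x | y < G x}, ψ x ∂μ := by
  set F : α → ℝ → E := fun x y => (Iio (G x)).indicator (fun _ => ψ x) y
  have hFm : AEStronglyMeasurable (Function.uncurry F) (μ.prod (volume.restrict (Ioi 0))) :=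
    hψ.comp_fst.indicator₀ (s := {q | q.2 < G q.1})
      (nullMeasurableSet_lt measurable_snd.aemeasurable hG.comp_fst)
  have hFint : Integrable (Function.uncurry F) (μ.prod (volume.restrict (Ioi 0))) := by
    refine (integrable_prod_iff hFm).2
      ⟨.of_forall fun x => integrableOn_Ioi_indicator_Iio (G x) (ψ x), hint.norm.congr ?_⟩
    filter_upwards [hG0] with x hx
    simp only [F, Function.uncurry_apply_pair, norm_indicator_eq_indicator_norm,
      setIntegral_Ioi_indicator_Iio hx, norm_smul, Real.norm_of_nonneg hx, smul_eq_mul]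
  calc ∫ x, G x • ψ x ∂μ = ∫ x, (∫ y in Ioi 0, F x y) ∂μ := by
        refine integral_congr_ae ?_
        filter_upwards [hG0] with x hx
        exact (setIntegral_Ioi_indicator_Iio hx _).symm
    _ = ∫ y in Ioi 0, ∫ x, F x y ∂μ := integral_integral_swap hFint
    _ = ∫ y in Ioi 0, ∫ x in {x | y < G x}, ψ x ∂μ := by
        refine integral_congr_ae (.of_forall fun y => ?_)
        exact integral_indicator₀ (nullMeasurableSet_lt aemeasurable_const hG)

theorem norm_integral_smul_le_of_norm_setIntegral_lt_le [SFinite μ] {G : α → ℝ} {ψ : α → E}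
    {K M : ℝ} (hG : AEMeasurable G μ) (hψ : AEStronglyMeasurable ψ μ)
    (hGM : ∀ᵐ x ∂μ, G x ∈ Icc 0 M) (hM : 0 ≤ M)
    (hlevel : ∀ y > 0, ‖∫ x in {x | y < G x}, ψ x ∂μ‖ ≤ K) :
    ‖∫ x, G x • ψ x ∂μ‖ ≤ M * K := by
  have hK : 0 ≤ K := (norm_nonneg _).trans (hlevel 1 one_pos)
  by_cases hint : Integrable (fun x => G x • ψ x) μ
  swap
  · rw [integral_undef hint, norm_zero]; positivity
  rw [integral_smul_eq_integral_setIntegral_lt hG hψ (hGM.mono fun x hx => hx.1) hint,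
    ← smul_eq_mul, ← setIntegral_Ioi_indicator_Iio hM]
  refine norm_integral_le_of_norm_le (integrableOn_Ioi_indicator_Iio M K)
    (ae_restrict_of_forall_mem measurableSet_Ioi fun y (hy0 : 0 < y) => ?_)
  by_cases hy : y ∈ Iio M
  · rw [indicator_of_mem hy]
    exact hlevel y hy0
  · have hnull : μ {x | y < G x} = 0 :=
      measure_eq_zero_iff_ae_notMem.2 (hGM.mono fun x hx h => hy (mem_Iio.2 (h.trans_le hx.2)))
    rw [indicator_of_notMem hy, setIntegral_measure_zero _ hnull, norm_zero]

end

theorem Set.OrdConnected.setOf_lt_inter {α β : Type*} [Preorder α] [Preorder β] {s : Set α}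
    {G : α → β} (hs : s.OrdConnected) (hG : MonotoneOn G s ∨ AntitoneOn G s) (y : β) :
    ({x | y < G x} ∩ s).OrdConnected := by
  refine ⟨fun x hx z hz w hw => ?_⟩
  have hws : w ∈ s := hs.out hx.2 hz.2 hw
  refine ⟨?_, hws⟩
  rcases hG with hG | hG
  · exact hx.1.trans_le (hG hx.2 hws hw.1)
  · exact hz.1.trans_le (hG hws hz.2 hw.2)

open Complex in
theorem norm_setIntegral_exp_I_mul_le_of_le {a b t lam : ℝ} {f p : ℝ → ℝ} (ht : 0 < t)
    (hlam : 0 < lam)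
    (hderiv : ∀ x ∈ Ioo a b, HasDerivAt f (p x) x) (hlow : ∀ x ∈ Ioo a b, t ≤ p x)
    (hmono : MonotoneOn p (Ioo a b) ∨ AntitoneOn p (Ioo a b)) :
    ‖∫ x in Ioo a b, exp (I * (lam * f x))‖ ≤ 2 * (lam * t)⁻¹ := by
  set φ : ℝ → ℂ := fun x => exp (I * (lam * f x))
  set ψ : ℝ → ℂ := fun x => I * lam * p x * φ x
  have hpos : ∀ x ∈ Ioo a b, 0 < p x := fun x hx => ht.trans_le (hlow x hx)
  have hφ : ∀ x, ‖φ x‖ = 1 := fun x => by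
    simpa [φ, mul_comm I] using norm_exp_ofReal_mul_I (lam * f x)
  have hd : ∀ x ∈ Ioo a b, HasDerivAt φ (ψ x) x := fun x hx => by
    convert ((((hderiv x hx).ofReal_comp).const_mul (lam : ℂ)).const_mul I).cexp using 1
    simp only [ψ, φ]; ring
  have hG : MonotoneOn (fun x => (p x)⁻¹) (Ioo a b) ∨ AntitoneOn (fun x => (p x)⁻¹) (Ioo a b) :=
    hmono.symm.imp (fun h x hx y hy hxy => inv_anti₀ (hpos y hy) (h hx hy hxy))
      (fun h x hx y hy hxy => inv_anti₀ (hpos x hx) (h hx hy hxy))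
  have hp : AEMeasurable p (volume.restrict (Ioo a b)) :=
    hmono.elim (aemeasurable_restrict_of_monotoneOn measurableSet_Ioo)
      (aemeasurable_restrict_of_antitoneOn measurableSet_Ioo)
  have hψ : AEStronglyMeasurable ψ (volume.restrict (Ioo a b)) :=
    ((measurable_ofReal.comp_aemeasurable hp).const_mul _).aestronglyMeasurable.mul
      (ContinuousOn.aestronglyMeasurable (fun x hx => (hd x hx).continuousAt.continuousWithinAt)
        measurableSet_Ioo)
  have hlevel : ∀ y > 0,
      ‖∫ x in {x | y < (p x)⁻¹}, ψ x ∂volume.restrict (Ioo a b)‖ ≤ 2 := fun y _ => by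
    rw [Measure.restrict_restrict' measurableSet_Ioo]
    exact norm_setIntegral_le_of_ordConnected zero_le_one (ordConnected_Ioo.setOf_lt_inter hG y)
      (bddBelow_Ioo.mono inter_subset_right) (bddAbove_Ioo.mono inter_subset_right)
      (fun x _ => (hφ x).le) (fun x hx => hd x hx.2) |>.trans_eq (mul_one 2)
  have hbound := norm_integral_smul_le_of_norm_setIntegral_lt_le (G := fun x => (p x)⁻¹)
    hp.inv hψ
    (ae_restrict_of_forall_mem measurableSet_Ioo fun x hx =>
      ⟨(inv_pos.2 (hpos x hx)).le, inv_anti₀ ht (hlow x hx)⟩) (inv_nonneg.2 ht.le) hlevel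
  have hGψ : ∀ x ∈ Ioo a b, (p x)⁻¹ • ψ x = I * lam * φ x := fun x hx => by
    have : (p x : ℂ) ≠ 0 := ofReal_ne_zero.2 (hpos x hx).ne'
    simp only [ψ, real_smul, ofReal_inv]; field_simp
  rw [setIntegral_congr_fun measurableSet_Ioo hGψ, integral_const_mul, norm_mul, norm_mul, norm_I,
    one_mul, norm_real, Real.norm_of_nonneg hlam.le] at hbound
  rw [mul_inv, mul_left_comm, le_inv_mul_iff₀ hlam]
  linarith

theorem forall_le_or_forall_le_neg_of_le_abs_deriv {a b t : ℝ} {f f' : ℝ → ℝ} (ht : 0 < t)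
    (hderiv : ∀ x ∈ Ioo a b, HasDerivAt f (f' x) x) (hlow : ∀ x ∈ Ioo a b, t ≤ |f' x|) :
    (∀ x ∈ Ioo a b, t ≤ f' x) ∨ ∀ x ∈ Ioo a b, f' x ≤ -t := by
  have hne : ∀ x ∈ Ioo a b, f' x ≠ 0 := fun x hx h => by
    simpa [h] using ht.trans_le (hlow x hx)
  rcases hasDerivWithinAt_forall_lt_or_forall_gt_of_forall_ne (convex_Ioo a b)
    (fun x hx => (hderiv x hx).hasDerivWithinAt) hne with hneg | hpos
  · exact .inr fun x hx => by
      have := hlow x hx; rw [abs_of_neg (hneg x hx)] at this; linarith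
  · exact .inl fun x hx => by
      have := hlow x hx; rwa [abs_of_pos (hpos x hx)] at this

open Complex in
theorem norm_integral_exp_I_mul_neg {α : Type*} [MeasurableSpace α] (μ : Measure α) (lam : ℝ)
    (f : α → ℝ) :
    ‖∫ x, exp (I * (lam * ((-f x : ℝ) : ℂ))) ∂μ‖ = ‖∫ x, exp (I * (lam * f x)) ∂μ‖ := by
  rw [← RCLike.norm_conj, ← integral_conj]
  congr 2 with x
  rw [← exp_conj]
  simp [map_mul, conj_I, conj_ofReal]

theorem van_der_corput_general (a b : ℝ) (hab : a ≤ b) (f f' : ℝ → ℝ)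
    (hderiv : ∀ x ∈ Set.Ioo a b, HasDerivAt f (f' x) x)
    (t : ℝ) (ht : 0 < t)
    (hlow : ∀ x ∈ Set.Ioo a b, t ≤ |f' x|)
    (hmono : MonotoneOn f' (Set.Ioo a b) ∨ AntitoneOn f' (Set.Ioo a b)) :
    ∀ lam : ℝ, 0 < lam →
      ‖∫ x in a..b, Complex.exp (Complex.I * (lam * f x))‖ ≤ 3 * (lam * t)⁻¹ := by
  intro lam hlam
  rw [intervalIntegral.integral_of_le hab, integral_Ioc_eq_integral_Ioo]
  refine le_trans ?_ (by gcongr; norm_num : 2 * (lam * t)⁻¹ ≤ 3 * (lam * t)⁻¹)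
  rcases forall_le_or_forall_le_neg_of_le_abs_deriv ht hderiv hlow with hpos | hneg
  · exact norm_setIntegral_exp_I_mul_le_of_le ht hlam hderiv hpos hmono
  · rw [← norm_integral_exp_I_mul_neg]
    exact norm_setIntegral_exp_I_mul_le_of_le (f := fun x => -f x) ht hlam
      (fun x hx => (hderiv x hx).neg) (fun x hx => le_neg.2 (hneg x hx))
      (hmono.symm.imp AntitoneOn.neg MonotoneOn.neg)

/-- van der Corput: if `f` is `C¹` on `(a,b)` with `|f'| ≥ t` and `f'`
monotonic, then `|∫_a^b e^{iλ f(x)} dx| ≤ 3 (λ t)⁻¹` for all `λ > 0`. -/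
theorem van_der_corput (a b : ℝ) (hab : a ≤ b) (f f' : ℝ → ℝ)
    (hderiv : ∀ x ∈ Set.Ioo a b, HasDerivAt f (f' x) x)
    (hcont : ContinuousOn f' (Set.Ioo a b))
    (t : ℝ) (ht : 0 < t)
    (hlow : ∀ x ∈ Set.Ioo a b, t ≤ |f' x|)
    (hmono : MonotoneOn f' (Set.Ioo a b) ∨ AntitoneOn f' (Set.Ioo a b)) :
    ∀ lam : ℝ, 0 < lam →
      ‖∫ x in a..b, Complex.exp (Complex.I * (lam * f x))‖ ≤ 3 * (lam * t)⁻¹ :=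
  van_der_corput_general a b hab f f' hderiv t ht hlow hmono
end
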